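/- arXiv:0911.1773 — 6 statements merged into one kernel-verified Lean document; each statement's English description precedes it below -/
import Mathlib

section
/- Assume the pair (ζ, n) satisfies condition (★) with respect to (m, v_0, v_1, ℓ, ζ⁰). Let X be an ADHM representation with dim V_∞ = 1, dim V_0 = v_0 and dim V_1 = v_1, and let F• be a full flag of V_1 of length N = v_1. Then (X, F•) is (m,ℓ)-stable if and only if (X, F•) is (ζ,n)-stable. -/
open Module


section ADHMPrelim

/-- An ADHM representation on the blow-up quiver: vector spaces `V0, V1, Vinf` and maps
`B1 B2 : V1 → V0`, `d : V0 → V1`, and `r`-tuples of maps `i : Vinf → V0`, `j : V1 → Vinf`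
(encoding `i : Vinf ⊗ ℂ^r → V0` and `j : V1 → Vinf ⊗ ℂ^r`), satisfying the ADHM relation
`B1 ∘ d ∘ B2 - B2 ∘ d ∘ B1 + i ∘ j = 0`. -/
structure ADHMData (r : ℕ) (V0 V1 Vinf : Type*)
    [AddCommGroup V0] [Module ℂ V0] [AddCommGroup V1] [Module ℂ V1]
    [AddCommGroup Vinf] [Module ℂ Vinf] where
  B1 : V1 →ₗ[ℂ] V0
  B2 : V1 →ₗ[ℂ] V0
  d : V0 →ₗ[ℂ] V1
  i : Fin r → (Vinf →ₗ[ℂ] V0)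
  j : Fin r → (V1 →ₗ[ℂ] Vinf)
  rel : B1 ∘ₗ d ∘ₗ B2 - B2 ∘ₗ d ∘ₗ B1 + ∑ k : Fin r, (i k) ∘ₗ (j k) = 0

variable {r : ℕ} {V0 V1 Vinf : Type*}
  [AddCommGroup V0] [Module ℂ V0] [AddCommGroup V1] [Module ℂ V1]
  [AddCommGroup Vinf] [Module ℂ Vinf]

/-- A submodule of an ADHM representation: a triple of subspaces invariant under all the
structure maps. -/
structure ADHMSub (X : ADHMData r V0 V1 Vinf) where
  S0 : Submodule ℂ V0
  S1 : Submodule ℂ V1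
  Sinf : Submodule ℂ Vinf
  hB1 : ∀ x ∈ S1, X.B1 x ∈ S0
  hB2 : ∀ x ∈ S1, X.B2 x ∈ S0
  hd : ∀ x ∈ S0, X.d x ∈ S1
  hi : ∀ (k : Fin r), ∀ x ∈ Sinf, X.i k x ∈ S0
  hj : ∀ (k : Fin r), ∀ x ∈ S1, X.j k x ∈ Sinf

namespace ADHMSub

variable {X : ADHMData r V0 V1 Vinf}

/-- `rank S = dim S0 + dim S1 + dim S∞`, as a rational number. -/
noncomputable def rank (S : ADHMSub X) : ℚ :=
  (finrank ℂ S.S0 : ℚ) + (finrank ℂ S.S1 : ℚ) + (finrank ℂ S.Sinf : ℚ)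

/-- `ζ·vdim S = ζ₀ dim S0 + ζ₁ dim S1 + ζ∞ dim S∞`. -/
noncomputable def zdeg (ζ : ℚ × ℚ × ℚ) (S : ADHMSub X) : ℚ :=
  ζ.1 * (finrank ℂ S.S0 : ℚ) + ζ.2.1 * (finrank ℂ S.S1 : ℚ) + ζ.2.2 * (finrank ℂ S.Sinf : ℚ)

/-- The slope `μ_{ζ,n}(S)` of a submodule with respect to a flag `F` of length `N`. -/
noncomputable def mu (ζ : ℚ × ℚ × ℚ) (n : ℕ → ℚ) (N : ℕ) (F : ℕ → Submodule ℂ V1)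
    (S : ADHMSub X) : ℚ :=
  (S.zdeg ζ + ∑ k ∈ Finset.Icc 1 N, n k * (finrank ℂ ↥(S.S1 ⊓ F k) : ℚ)) / S.rank

/-- A submodule is nonzero if one of its components is nonzero. -/
def IsNonzero (S : ADHMSub X) : Prop := S.S0 ≠ ⊥ ∨ S.S1 ≠ ⊥ ∨ S.Sinf ≠ ⊥

/-- A submodule is proper if one of its components is a proper subspace. -/
def IsProper (S : ADHMSub X) : Prop := S.S0 ≠ ⊤ ∨ S.S1 ≠ ⊤ ∨ S.Sinf ≠ ⊤

end ADHMSub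

/-- The whole representation, viewed as a submodule of itself. -/
def ADHMData.top (X : ADHMData r V0 V1 Vinf) : ADHMSub X where
  S0 := ⊤
  S1 := ⊤
  Sinf := ⊤
  hB1 := fun _ _ => Submodule.mem_top
  hB2 := fun _ _ => Submodule.mem_top
  hd := fun _ _ => Submodule.mem_top
  hi := fun _ _ _ => Submodule.mem_top
  hj := fun _ _ _ => Submodule.mem_top

/-- A flag of `V1` of length `N`: increasing with 1-dimensional (or zero) steps. -/
structure IsFlag (N : ℕ) (F : ℕ → Submodule ℂ V1) : Prop where
  bot : F 0 = ⊥
  top : F N = ⊤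
  mono : ∀ k < N, F k ≤ F (k + 1)
  step : ∀ k < N, finrank ℂ ↥(F (k + 1)) ≤ finrank ℂ ↥(F k) + 1

/-- A full flag of `V1` of length `N`: increasing with exactly 1-dimensional steps. -/
structure IsFullFlag (N : ℕ) (F : ℕ → Submodule ℂ V1) : Prop where
  bot : F 0 = ⊥
  top : F N = ⊤
  mono : ∀ k < N, F k ≤ F (k + 1)
  dim : ∀ k ≤ N, finrank ℂ ↥(F k) = k

/-- `(ζ,n)`-stability of the pair `(X, F)`. -/
def PairStable (X : ADHMData r V0 V1 Vinf) (ζ : ℚ × ℚ × ℚ) (n : ℕ → ℚ) (N : ℕ)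
    (F : ℕ → Submodule ℂ V1) : Prop :=
  ∀ S : ADHMSub X, S.IsNonzero → S.IsProper → S.mu ζ n N F < X.top.mu ζ n N F

/-- `(ζ,n)`-semistability of the pair `(X, F)`. -/
def PairSemistable (X : ADHMData r V0 V1 Vinf) (ζ : ℚ × ℚ × ℚ) (n : ℕ → ℚ) (N : ℕ)
    (F : ℕ → Submodule ℂ V1) : Prop :=
  ∀ S : ADHMSub X, S.IsNonzero → S.IsProper → S.mu ζ n N F ≤ X.top.mu ζ n N F

namespace ADHMSub

variable {X : ADHMData r V0 V1 Vinf}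

/-- The ADHM representation obtained by restricting all structure maps to a submodule. -/
def subRep (S : ADHMSub X) : ADHMData r S.S0 S.S1 S.Sinf where
  B1 := X.B1.restrict S.hB1
  B2 := X.B2.restrict S.hB2
  d := X.d.restrict S.hd
  i := fun k => (X.i k).restrict (S.hi k)
  j := fun k => (X.j k).restrict (S.hj k)
  rel := by
    ext x
    have hx := LinearMap.congr_fun X.rel (x : V1)
    simp only [LinearMap.add_apply, LinearMap.sub_apply, LinearMap.coe_comp,
      Function.comp_apply, LinearMap.sum_apply, LinearMap.zero_apply] at hx
    simp only [LinearMap.add_apply, LinearMap.sub_apply, LinearMap.coe_comp,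
      Function.comp_apply, LinearMap.sum_apply, LinearMap.zero_apply,
      AddSubmonoidClass.coe_finset_sum, AddSubgroupClass.coe_sub, Submodule.coe_add,
      LinearMap.restrict_coe_apply, ZeroMemClass.coe_zero]
    exact hx

/-- The quotient ADHM representation of `X` by a submodule `S`. -/
def quotRep (S : ADHMSub X) : ADHMData r (V0 ⧸ S.S0) (V1 ⧸ S.S1) (Vinf ⧸ S.Sinf) where
  B1 := Submodule.mapQ S.S1 S.S0 X.B1 (fun x hx => S.hB1 x hx)
  B2 := Submodule.mapQ S.S1 S.S0 X.B2 (fun x hx => S.hB2 x hx)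
  d := Submodule.mapQ S.S0 S.S1 X.d (fun x hx => S.hd x hx)
  i := fun k => Submodule.mapQ S.Sinf S.S0 (X.i k) (fun x hx => S.hi k x hx)
  j := fun k => Submodule.mapQ S.S1 S.Sinf (X.j k) (fun x hx => S.hj k x hx)
  rel := by
    refine Submodule.linearMap_qext _ ?_
    ext x
    have hx := LinearMap.congr_fun X.rel x
    simp only [LinearMap.add_apply, LinearMap.sub_apply, LinearMap.coe_comp,
      Function.comp_apply, LinearMap.sum_apply, LinearMap.zero_apply] at hx
    simp only [LinearMap.add_apply, LinearMap.sub_apply, LinearMap.coe_comp,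
      Function.comp_apply, LinearMap.sum_apply, LinearMap.zero_apply,
      Submodule.mkQ_apply, Submodule.mapQ_apply]
    have hsum : (∑ k : Fin r, Submodule.Quotient.mk (p := S.S0) (X.i k (X.j k x)))
        = Submodule.Quotient.mk (∑ k : Fin r, X.i k (X.j k x)) := by
      rw [← Submodule.mkQ_apply, map_sum]
      simp [Submodule.mkQ_apply]
    rw [hsum, ← Submodule.Quotient.mk_sub, ← Submodule.Quotient.mk_add, hx,
      Submodule.Quotient.mk_zero]

end ADHMSub

end ADHMPrelim


section StarPrelim

/-- `ζ·s` for a triple of rationals and a triple of naturals. -/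
def zdot (z : ℚ × ℚ × ℚ) (s : ℕ × ℕ × ℕ) : ℚ :=
  z.1 * s.1 + z.2.1 * s.2.1 + z.2.2 * s.2.2

/-- `rank s = s₀ + s₁ + s∞`. -/
def srank (s : ℕ × ℕ × ℕ) : ℚ := (s.1 : ℚ) + (s.2.1 : ℚ) + (s.2.2 : ℚ)

/-- The finite set `D` of dimension triples `s ≠ 0` with `0 ≤ s₀ ≤ v₀`, `0 ≤ s₁ ≤ v₁`,
`s∞ ∈ {0,1}` and `ζ⁰·s ≠ 0`. -/
def Dset (v0 v1 : ℕ) (z0 : ℚ × ℚ × ℚ) : Finset (ℕ × ℕ × ℕ) :=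
  (Finset.Iic v0 ×ˢ Finset.Iic v1 ×ˢ Finset.Iic 1).filter
    (fun s => s ≠ (0, 0, 0) ∧ zdot z0 s ≠ 0)

/-- Condition (★) on the stability parameter `(ζ, n)`, relative to `(m, v₀, v₁, ℓ, ζ⁰)`. -/
def SatisfiesStar (m v0 v1 ℓ : ℕ) (z0 ζ : ℚ × ℚ × ℚ) (n : ℕ → ℚ) : Prop :=
  -- (a)
  ζ.1 * (v0 : ℚ) + ζ.2.1 * (v1 : ℚ) + ζ.2.2 = 0 ∧
  -- (b)
  (∀ k ∈ Finset.Icc 1 (v1 - 1),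
      ((v0 : ℚ) + (v1 : ℚ) + 1) * ∑ i ∈ Finset.Icc (k + 1) v1, (i : ℚ) * n i < n k ∧
      0 < ((v0 : ℚ) + (v1 : ℚ) + 1) * ∑ i ∈ Finset.Icc (k + 1) v1, (i : ℚ) * n i) ∧
  -- (c)
  (∀ s ∈ Dset v0 v1 z0, ∀ s' ∈ Dset v0 v1 z0,
      |zdot z0 s - zdot ζ s| / srank s + ∑ i ∈ Finset.Icc 1 v1, (i : ℚ) * n i
        < |zdot z0 s'| / srank s') ∧
  -- (d)
  (0 < (∑ i ∈ Finset.Icc 1 ℓ, (i : ℚ) * n i)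
        - (((v0 : ℚ) + (v1 : ℚ) + 1) / (2 * (m : ℚ) + 1))
          * ((m : ℚ) * ζ.1 + ((m : ℚ) + 1) * ζ.2.1) ∧
   (∑ i ∈ Finset.Icc 1 ℓ, (i : ℚ) * n i)
        - (((v0 : ℚ) + (v1 : ℚ) + 1) / (2 * (m : ℚ) + 1))
          * ((m : ℚ) * ζ.1 + ((m : ℚ) + 1) * ζ.2.1) < n ℓ) ∧
  -- (e)
  ((v0 : ℚ) + (v1 : ℚ) + 1) * ∑ i ∈ Finset.Icc (ℓ + 1) v1, (i : ℚ) * n i <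
      min ((∑ i ∈ Finset.Icc 1 ℓ, (i : ℚ) * n i)
            - (((v0 : ℚ) + (v1 : ℚ) + 1) / (2 * (m : ℚ) + 1))
              * ((m : ℚ) * ζ.1 + ((m : ℚ) + 1) * ζ.2.1))
          ((n ℓ - ∑ i ∈ Finset.Icc 1 ℓ, (i : ℚ) * n i)
            + (((v0 : ℚ) + (v1 : ℚ) + 1) / (2 * (m : ℚ) + 1))
              * ((m : ℚ) * ζ.1 + ((m : ℚ) + 1) * ζ.2.1))

end StarPrelim

section MLStable

variable {r : ℕ} {V0 V1 Vinf : Type*}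
  [AddCommGroup V0] [Module ℂ V0] [AddCommGroup V1] [Module ℂ V1]
  [AddCommGroup Vinf] [Module ℂ Vinf]

/-- `(m,ℓ)`-stability of a pair `(X, F)` consisting of an ADHM representation with
`dim V∞ = 1` and a full flag `F` of `V1`. -/
def MLStable (X : ADHMData r V0 V1 Vinf) (m ℓ : ℕ) (F : ℕ → Submodule ℂ V1) : Prop :=
  (∀ S : ADHMSub X, S.Sinf = ⊥ →
      (m : ℤ) * (finrank ℂ S.S1 : ℤ) ≤ ((m : ℤ) + 1) * (finrank ℂ S.S0 : ℤ)) ∧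
  (∀ T : ADHMSub X, T.Sinf = ⊤ →
      ((m : ℤ) + 1) * ((finrank ℂ V0 : ℤ) - (finrank ℂ T.S0 : ℤ)) ≤
        (m : ℤ) * ((finrank ℂ V1 : ℤ) - (finrank ℂ T.S1 : ℤ))) ∧
  (∀ S : ADHMSub X, S.IsNonzero → S.Sinf = ⊥ →
      (m : ℤ) * (finrank ℂ S.S1 : ℤ) = ((m : ℤ) + 1) * (finrank ℂ S.S0 : ℤ) →
      S.S1 ⊓ F ℓ = ⊥) ∧
  (∀ T : ADHMSub X, T.IsProper → T.Sinf = ⊤ →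
      ((m : ℤ) + 1) * ((finrank ℂ V0 : ℤ) - (finrank ℂ T.S0 : ℤ)) =
        (m : ℤ) * ((finrank ℂ V1 : ℤ) - (finrank ℂ T.S1 : ℤ)) →
      ¬ F ℓ ≤ T.S1)

end MLStable


section AuxLemmas

private lemma abs_div_lem' {ρ x y t : ℚ} (hρ : 0 < ρ) (h : x / ρ + t < y / ρ) :
    x + ρ * t < y := by
  have h2 := mul_lt_mul_of_pos_right h hρ
  rw [add_mul, div_mul_cancel₀ _ (ne_of_gt hρ), div_mul_cancel₀ _ (ne_of_gt hρ)] at h2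
  linarith

private lemma off_wall_lt' {rk ρ t zs z0s sd : ℚ}
    (hρ : 1 ≤ ρ) (hrk : 1 ≤ rk) (ht : 0 < t) (hz : z0s < 0)
    (hcc : |z0s - zs| / ρ + t < |z0s| / ρ) (hsd0 : 0 ≤ sd) (hsd : sd ≤ t) :
    (zs + sd) * rk < t * ρ := by
  have hρ0 : (0:ℚ) < ρ := by linarith
  have h1 := abs_div_lem' hρ0 hcc
  rw [abs_of_neg hz] at h1
  have h2 : zs - z0s ≤ |z0s - zs| := by
    rw [abs_sub_comm]; exact le_abs_self _
  have h3 : zs + sd < (1 - ρ) * t := by nlinarith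
  have h4 : zs + sd ≤ 0 := by nlinarith [mul_nonneg (by linarith : (0:ℚ) ≤ ρ - 1) ht.le]
  have h5 : (zs + sd) * rk ≤ zs + sd := by
    nlinarith [mul_nonneg (by linarith : (0:ℚ) ≤ rk - 1) (neg_nonneg.mpr h4)]
  nlinarith [mul_pos (lt_of_lt_of_le one_pos hρ) ht]

private lemma pos_case_keep' {rk ρ t zs z0s sd : ℚ}
    (hρ : 0 < ρ) (hrk : 1 ≤ rk) (ht : 0 < t) (hz : 0 < z0s)
    (hcc : |z0s - zs| / ρ + t < |z0s| / ρ) (hsd0 : 0 ≤ sd)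
    (hlt : (zs + sd) * rk < t * ρ) : False := by
  have h1 := abs_div_lem' hρ hcc
  rw [abs_of_pos hz] at h1
  have h2 : z0s - zs ≤ |z0s - zs| := le_abs_self _
  have h3 : ρ * t < zs := by linarith
  have h4 : 0 < zs + sd := by nlinarith [mul_pos hρ ht]
  have h5 : zs + sd ≤ (zs + sd) * rk := by
    nlinarith [mul_nonneg (by linarith : (0:ℚ) ≤ rk - 1) h4.le]
  nlinarith

private lemma wall_id' (m : ℕ) (z1 z2 a b Bc rk : ℚ)
    (hw : (m:ℚ) * b = ((m:ℚ) + 1) * a)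
    (hB : Bc * (2*(m:ℚ)+1) = rk * ((m:ℚ)*z1 + ((m:ℚ)+1)*z2)) :
    rk * (z1*a + z2*b) = (a+b) * Bc := by
  have h : (2*(m:ℚ)+1) ≠ 0 := by positivity
  apply mul_left_cancel₀ h
  linear_combination rk*(z2 - z1)*hw - (a+b)*hB

private lemma lt_zero_of_nat_mul' {m : ℕ} {x : ℚ} (h : ((m:ℚ)+1) * x < 0) : x < 0 := by
  by_contra h'
  push_neg at h'
  nlinarith [mul_nonneg (show (0:ℚ) ≤ (m:ℚ)+1 by positivity) h']

private lemma pos_of_nat_mul' {m : ℕ} {x : ℚ} (h : 0 < ((m:ℚ)+1) * x) : 0 < x := by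
  by_contra h'
  push_neg at h'
  nlinarith [mul_nonpos_of_nonneg_of_nonpos (show (0:ℚ) ≤ (m:ℚ)+1 by positivity) h']

end AuxLemmas

set_option maxHeartbeats 3200000 in
/-- Under condition (★), `(m,ℓ)`-stability coincides with `(ζ,n)`-stability. -/
theorem mlStable_iff_pairStable
    (r m v0 v1 ℓ : ℕ) (hr : 1 ≤ r) (hv0 : 1 ≤ v0) (hv1 : 1 ≤ v1)
    (hℓ : ℓ ∈ Finset.Icc 1 v1)
    (z0 ζ : ℚ × ℚ × ℚ) (n : ℕ → ℚ)
    (hz0 : z0.1 < 0)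
    (hwall : (m : ℚ) * z0.1 + ((m : ℚ) + 1) * z0.2.1 = 0)
    (hnorm : z0.1 * (v0 : ℚ) + z0.2.1 * (v1 : ℚ) + z0.2.2 = 0)
    (hn : ∀ k ∈ Finset.Icc 1 v1, 0 < n k)
    (hstar : SatisfiesStar m v0 v1 ℓ z0 ζ n)
    {V0 V1 Vinf : Type*} [AddCommGroup V0] [Module ℂ V0] [FiniteDimensional ℂ V0]
    [AddCommGroup V1] [Module ℂ V1] [FiniteDimensional ℂ V1]
    [AddCommGroup Vinf] [Module ℂ Vinf] [FiniteDimensional ℂ Vinf]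
    (X : ADHMData r V0 V1 Vinf)
    (hV0 : finrank ℂ V0 = v0) (hV1 : finrank ℂ V1 = v1) (hVinf : finrank ℂ Vinf = 1)
    (F : ℕ → Submodule ℂ V1) (hF : IsFullFlag v1 F) :
    MLStable X m ℓ F ↔ PairStable X ζ n v1 F := by
  classical
  obtain ⟨hl1, hl2⟩ := Finset.mem_Icc.mp hℓ
  obtain ⟨ha, hbcond, hc, ⟨hd1, hd2⟩, he⟩ := hstar
  rw [lt_min_iff] at he
  obtain ⟨he1, he2⟩ := he
  clear hbcond
  -- opaque names for the key quantities
  obtain ⟨rkQ, hrkQdef⟩ : ∃ x : ℚ, x = (v0 : ℚ) + (v1 : ℚ) + 1 := ⟨_, rfl⟩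
  rw [← hrkQdef] at hd1 hd2 he1 he2
  obtain ⟨Bc, hBcdef⟩ : ∃ x : ℚ,
      x = rkQ / (2 * (m : ℚ) + 1) * ((m : ℚ) * ζ.1 + ((m : ℚ) + 1) * ζ.2.1) := ⟨_, rfl⟩
  rw [← hBcdef] at hd1 hd2 he1 he2
  obtain ⟨SL, hSLdef⟩ : ∃ x : ℚ, x = ∑ i ∈ Finset.Icc 1 ℓ, (i : ℚ) * n i := ⟨_, rfl⟩
  rw [← hSLdef] at hd1 hd2 he1 he2
  obtain ⟨SR, hSRdef⟩ : ∃ x : ℚ, x = ∑ i ∈ Finset.Icc (ℓ+1) v1, (i : ℚ) * n i := ⟨_, rfl⟩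
  rw [← hSRdef] at he1 he2
  -- basic positivity facts
  have hv0q : (0:ℚ) ≤ (v0:ℚ) := Nat.cast_nonneg _
  have hv1q : (0:ℚ) ≤ (v1:ℚ) := Nat.cast_nonneg _
  have hrkQpos : (0:ℚ) < rkQ := by rw [hrkQdef]; linarith
  have hrk1 : (1:ℚ) ≤ rkQ := by rw [hrkQdef]; linarith
  have hBmul : Bc * (2*(m:ℚ)+1) = rkQ * ((m:ℚ)*ζ.1 + ((m:ℚ)+1)*ζ.2.1) := by
    rw [hBcdef]
    have : (2*(m:ℚ)+1) ≠ 0 := by positivity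
    field_simp
  have hSRnn : 0 ≤ SR := by
    rw [hSRdef]
    apply Finset.sum_nonneg
    intro i hi
    obtain ⟨hi1, hi2⟩ := Finset.mem_Icc.mp hi
    exact mul_nonneg (Nat.cast_nonneg _) (hn i (Finset.mem_Icc.mpr ⟨by omega, hi2⟩)).le
  have hSLpos : 0 < SL := by
    rw [hSLdef]
    apply Finset.sum_pos'
    · intro i hi
      obtain ⟨hi1, hi2⟩ := Finset.mem_Icc.mp hi
      exact mul_nonneg (Nat.cast_nonneg _) (hn i (Finset.mem_Icc.mpr ⟨hi1, by omega⟩)).le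
    · refine ⟨ℓ, Finset.mem_Icc.mpr ⟨hl1, le_rfl⟩, ?_⟩
      have h1 : (0:ℚ) < (ℓ:ℚ) := by exact_mod_cast hl1
      exact mul_pos h1 (hn ℓ hℓ)
  have hStpos : 0 < SL + SR := by linarith
  -- splitting sums at ℓ
  have hsplit : ∀ g : ℕ → ℚ, ∑ k ∈ Finset.Icc 1 v1, g k
      = ∑ k ∈ Finset.Icc 1 ℓ, g k + ∑ k ∈ Finset.Icc (ℓ+1) v1, g k := by
    intro g
    have e1 : Finset.Icc 1 v1 = Finset.Ioc 0 v1 := Finset.Icc_add_one_left_eq_Ioc 0 v1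
    have e2 : Finset.Icc 1 ℓ = Finset.Ioc 0 ℓ := Finset.Icc_add_one_left_eq_Ioc 0 ℓ
    have e3 : Finset.Icc (ℓ+1) v1 = Finset.Ioc ℓ v1 := Finset.Icc_add_one_left_eq_Ioc ℓ v1
    rw [e1, e2, e3, Finset.sum_Ioc_consecutive g (Nat.zero_le ℓ) hl2]
  have htot : ∑ i ∈ Finset.Icc 1 v1, (i : ℚ) * n i = SL + SR := by
    rw [hSLdef, hSRdef]; exact hsplit _
  -- flag facts
  have hFmono : ∀ k, k ≤ v1 → ∀ j, j ≤ k → F j ≤ F k := by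
    intro k
    induction k with
    | zero =>
      intro _ j hj
      have hj0 : j = 0 := Nat.le_zero.mp hj
      subst hj0
      exact le_rfl
    | succ k ih =>
      intro hk j hj
      rcases Nat.lt_succ_iff_lt_or_eq.mp (Nat.lt_succ_of_le hj) with h | h
      · exact le_trans (ih (by omega) j (by omega)) (hF.mono k (by omega))
      · exact le_of_eq (congrArg F h)
  have hd_le : ∀ (W : Submodule ℂ V1) (k : ℕ), k ≤ v1 →
      finrank ℂ ↥(W ⊓ F k) ≤ k := by
    intro W k hk
    exact (Submodule.finrank_mono inf_le_right).trans (le_of_eq (hF.dim k hk))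
  -- nonzero / proper numeric facts
  have hbotne : (⊥ : Submodule ℂ Vinf) ≠ ⊤ := by
    intro h
    have h1 : finrank ℂ (⊥ : Submodule ℂ Vinf) = 0 := finrank_bot ℂ Vinf
    rw [h, finrank_top, hVinf] at h1
    exact one_ne_zero h1
  have hnz_ge : ∀ S : ADHMSub X, S.IsNonzero →
      1 ≤ finrank ℂ S.S0 + finrank ℂ S.S1 + finrank ℂ S.Sinf := by
    intro S hnz
    rcases hnz with h | h | h
    · have : finrank ℂ S.S0 ≠ 0 := fun h0 => h (Submodule.finrank_eq_zero.mp h0)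
      omega
    · have : finrank ℂ S.S1 ≠ 0 := fun h0 => h (Submodule.finrank_eq_zero.mp h0)
      omega
    · have : finrank ℂ S.Sinf ≠ 0 := fun h0 => h (Submodule.finrank_eq_zero.mp h0)
      omega
  have hproper_lt : ∀ S : ADHMSub X, S.IsProper → S.Sinf = ⊤ →
      finrank ℂ S.S0 + finrank ℂ S.S1 + 1 ≤ v0 + v1 := by
    intro S hp hinf
    have h0 : finrank ℂ S.S0 ≤ v0 := hV0 ▸ Submodule.finrank_le _
    have h1 : finrank ℂ S.S1 ≤ v1 := hV1 ▸ Submodule.finrank_le _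
    rcases hp with h | h | h
    · have h2 : finrank ℂ S.S0 ≠ v0 :=
        fun he' => h (Submodule.eq_top_of_finrank_eq (by rw [he', hV0]))
      omega
    · have h2 : finrank ℂ S.S1 ≠ v1 :=
        fun he' => h (Submodule.eq_top_of_finrank_eq (by rw [he', hV1]))
      omega
    · exact absurd hinf h
  -- μ of the total object
  have hmu_top : X.top.mu ζ n v1 F = (SL + SR) / rkQ := by
    have e0 : ((finrank ℂ ↥(X.top.S0) : ℚ)) = (v0:ℚ) := by
      rw [show X.top.S0 = (⊤ : Submodule ℂ V0) from rfl, finrank_top, hV0]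
    have e1 : ((finrank ℂ ↥(X.top.S1) : ℚ)) = (v1:ℚ) := by
      rw [show X.top.S1 = (⊤ : Submodule ℂ V1) from rfl, finrank_top, hV1]
    have einf : ((finrank ℂ ↥(X.top.Sinf) : ℚ)) = 1 := by
      rw [show X.top.Sinf = (⊤ : Submodule ℂ Vinf) from rfl, finrank_top, hVinf, Nat.cast_one]
    have esum : ∑ k ∈ Finset.Icc 1 v1, n k * ((finrank ℂ ↥(X.top.S1 ⊓ F k)) : ℚ) = SL + SR := by
      rw [← htot]
      apply Finset.sum_congr rfl
      intro k hk
      have hk2 : k ≤ v1 := (Finset.mem_Icc.mp hk).2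
      rw [show X.top.S1 = (⊤ : Submodule ℂ V1) from rfl, top_inf_eq, hF.dim k hk2, mul_comm]
    simp only [ADHMSub.mu, ADHMSub.zdeg, ADHMSub.rank, e0, e1, einf, esum]
    rw [show ζ.1*(v0:ℚ) + ζ.2.1*(v1:ℚ) + ζ.2.2*1 = 0 by linear_combination ha]
    rw [zero_add, hrkQdef]
  -- numeric reformulation of stability
  have key : ∀ S : ADHMSub X, S.IsNonzero →
      (S.mu ζ n v1 F < X.top.mu ζ n v1 F ↔
        (ζ.1 * (finrank ℂ S.S0 : ℚ) + ζ.2.1 * (finrank ℂ S.S1 : ℚ)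
            + ζ.2.2 * (finrank ℂ S.Sinf : ℚ)
          + ∑ k ∈ Finset.Icc 1 v1, n k * (finrank ℂ ↥(S.S1 ⊓ F k) : ℚ)) * rkQ
          < (SL + SR) * ((finrank ℂ S.S0 : ℚ) + (finrank ℂ S.S1 : ℚ)
            + (finrank ℂ S.Sinf : ℚ))) := by
    intro S hnz
    have hge := hnz_ge S hnz
    have hρ : (0:ℚ) < (finrank ℂ S.S0 : ℚ) + (finrank ℂ S.S1 : ℚ) + (finrank ℂ S.Sinf : ℚ) := by
      have h1 : (1:ℚ) ≤ ((finrank ℂ S.S0 + finrank ℂ S.S1 + finrank ℂ S.Sinf : ℕ) : ℚ) := by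
        exact_mod_cast hge
      push_cast at h1
      linarith
    rw [hmu_top]
    simp only [ADHMSub.mu, ADHMSub.zdeg, ADHMSub.rank]
    rw [div_lt_div_iff₀ hρ hrkQpos]
  -- per-submodule sum bounds
  have hsd_nonneg : ∀ S : ADHMSub X,
      0 ≤ ∑ k ∈ Finset.Icc 1 v1, n k * (finrank ℂ ↥(S.S1 ⊓ F k) : ℚ) := by
    intro S
    apply Finset.sum_nonneg
    intro k hk
    exact mul_nonneg (hn k hk).le (Nat.cast_nonneg _)
  have hsd_le : ∀ S : ADHMSub X,
      (∑ k ∈ Finset.Icc 1 v1, n k * (finrank ℂ ↥(S.S1 ⊓ F k) : ℚ)) ≤ SL + SR := by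
    intro S
    rw [← htot]
    apply Finset.sum_le_sum
    intro k hk
    have hk2 : k ≤ v1 := (Finset.mem_Icc.mp hk).2
    have hdk : ((finrank ℂ ↥(S.S1 ⊓ F k)) : ℚ) ≤ (k : ℚ) := by
      exact_mod_cast hd_le S.S1 k hk2
    have hnk := (hn k hk).le
    nlinarith
  constructor
  · -- (m,ℓ)-stable → (ζ,n)-stable
    rintro ⟨ML1, ML2, ML3, ML4⟩ S hnz hprop
    rw [key S hnz]
    have hA0 : finrank ℂ S.S0 ≤ v0 := hV0 ▸ Submodule.finrank_le _
    have hB0 : finrank ℂ S.S1 ≤ v1 := hV1 ▸ Submodule.finrank_le _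
    have hE0 : finrank ℂ S.Sinf ≤ 1 := hVinf ▸ Submodule.finrank_le _
    have hge1 := hnz_ge S hnz
    have hA0q : ((finrank ℂ S.S0 : ℕ) : ℚ) ≤ (v0:ℚ) := by exact_mod_cast hA0
    have hB0q : ((finrank ℂ S.S1 : ℕ) : ℚ) ≤ (v1:ℚ) := by exact_mod_cast hB0
    have hfA0 : (0:ℚ) ≤ ((finrank ℂ S.S0 : ℕ) : ℚ) := Nat.cast_nonneg _
    have hfB0 : (0:ℚ) ≤ ((finrank ℂ S.S1 : ℕ) : ℚ) := Nat.cast_nonneg _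
    rcases (show finrank ℂ S.Sinf = 0 ∨ finrank ℂ S.Sinf = 1 by omega) with hE | hE
    · -- case S∞ = 0
      have hSinf : S.Sinf = ⊥ := Submodule.finrank_eq_zero.mp hE
      have hEq : ((finrank ℂ S.Sinf : ℕ) : ℚ) = 0 := by rw [hE]; norm_num
      have hml : (m:ℚ) * (finrank ℂ S.S1 : ℚ) ≤ ((m:ℚ)+1) * (finrank ℂ S.S0 : ℚ) := by
        exact_mod_cast ML1 S hSinf
      by_cases hwq : (m:ℚ) * (finrank ℂ S.S1 : ℚ) = ((m:ℚ)+1) * (finrank ℂ S.S0 : ℚ)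
      · -- on the wall
        have h3 : S.S1 ⊓ F ℓ = ⊥ := ML3 S hnz hSinf (by exact_mod_cast hwq)
        have hsdR : ∑ k ∈ Finset.Icc 1 v1, n k * ((finrank ℂ ↥(S.S1 ⊓ F k)) : ℚ) ≤ SR := by
          rw [hsplit]
          have hz1 : ∑ k ∈ Finset.Icc 1 ℓ, n k * ((finrank ℂ ↥(S.S1 ⊓ F k)) : ℚ) = 0 := by
            apply Finset.sum_eq_zero
            intro k hk
            obtain ⟨hk1, hk2⟩ := Finset.mem_Icc.mp hk
            have hb : S.S1 ⊓ F k = ⊥ := by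
              rw [eq_bot_iff, ← h3]
              exact inf_le_inf_left _ (hFmono ℓ hl2 k hk2)
            rw [hb, finrank_bot]
            norm_num
          rw [hz1, zero_add, hSRdef]
          apply Finset.sum_le_sum
          intro k hk
          obtain ⟨hk1, hk2⟩ := Finset.mem_Icc.mp hk
          have hnk := (hn k (Finset.mem_Icc.mpr ⟨by omega, hk2⟩)).le
          have hdk : ((finrank ℂ ↥(S.S1 ⊓ F k)) : ℚ) ≤ (k : ℚ) := by
            exact_mod_cast hd_le S.S1 k hk2
          nlinarith
        have hρ1 : (1:ℚ) ≤ (finrank ℂ S.S0 : ℚ) + (finrank ℂ S.S1 : ℚ) := by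
          have h1 : 1 ≤ finrank ℂ S.S0 + finrank ℂ S.S1 := by omega
          have h2 : (1:ℚ) ≤ ((finrank ℂ S.S0 + finrank ℂ S.S1 : ℕ) : ℚ) := by exact_mod_cast h1
          push_cast at h2
          linarith
        have hwid := wall_id' m ζ.1 ζ.2.1 (finrank ℂ S.S0 : ℚ) (finrank ℂ S.S1 : ℚ) Bc rkQ hwq hBmul
        have hρpos : (0:ℚ) < (finrank ℂ S.S0 : ℚ) + (finrank ℂ S.S1 : ℚ) := by linarith
        have s1 : (∑ k ∈ Finset.Icc 1 v1, n k * ((finrank ℂ ↥(S.S1 ⊓ F k)) : ℚ)) * rkQ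
            ≤ SR * rkQ := mul_le_mul_of_nonneg_right hsdR hrkQpos.le
        have s2 : ((finrank ℂ S.S0 : ℚ) + (finrank ℂ S.S1 : ℚ)) * (Bc + rkQ*SR)
            < ((finrank ℂ S.S0 : ℚ) + (finrank ℂ S.S1 : ℚ)) * SL :=
          mul_lt_mul_of_pos_left (by linarith) hρpos
        have s3 : 0 ≤ ((finrank ℂ S.S0 : ℚ) + (finrank ℂ S.S1 : ℚ) - 1) * (rkQ*SR) :=
          mul_nonneg (by linarith) (mul_nonneg hrkQpos.le hSRnn)
        have s4 : 0 ≤ ((finrank ℂ S.S0 : ℚ) + (finrank ℂ S.S1 : ℚ)) * SR :=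
          mul_nonneg hρpos.le hSRnn
        rw [hEq]
        linarith [hwid, s1, s2, s3, s4]
      · -- off the wall, S∞ = 0
        have hmlt : (m:ℚ) * (finrank ℂ S.S1 : ℚ) < ((m:ℚ)+1) * (finrank ℂ S.S0 : ℚ) :=
          lt_of_le_of_ne hml hwq
        have h1 : ((m:ℚ)+1)*(z0.1*(finrank ℂ S.S0 : ℚ) + z0.2.1*(finrank ℂ S.S1 : ℚ))
            = z0.1*(((m:ℚ)+1)*(finrank ℂ S.S0 : ℚ) - (m:ℚ)*(finrank ℂ S.S1 : ℚ)) := by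
          linear_combination ((finrank ℂ S.S1 : ℕ) : ℚ) * hwall
        have h2 : z0.1*(((m:ℚ)+1)*(finrank ℂ S.S0 : ℚ) - (m:ℚ)*(finrank ℂ S.S1 : ℚ)) < 0 :=
          mul_neg_of_neg_of_pos hz0 (by linarith)
        have h3 : z0.1*(finrank ℂ S.S0 : ℚ) + z0.2.1*(finrank ℂ S.S1 : ℚ) < 0 :=
          lt_zero_of_nat_mul' (m := m) (by linarith)
        have hzneg : z0.1*(finrank ℂ S.S0 : ℚ) + z0.2.1*(finrank ℂ S.S1 : ℚ)
            + z0.2.2*(finrank ℂ S.Sinf : ℚ) < 0 := by rw [hEq]; linarith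
        have hmem : ((finrank ℂ S.S0, finrank ℂ S.S1, finrank ℂ S.Sinf) : ℕ×ℕ×ℕ)
            ∈ Dset v0 v1 z0 := by
          simp only [Dset, Finset.mem_filter, Finset.mem_product, Finset.mem_Iic]
          refine ⟨⟨hA0, hB0, hE0⟩, ?_, ?_⟩
          · intro hcontra
            rw [Prod.ext_iff, Prod.ext_iff] at hcontra
            simp only at hcontra
            omega
          · show zdot z0 _ ≠ 0
            exact ne_of_lt hzneg
        have hcc := hc _ hmem _ hmem
        rw [htot] at hcc
        have hcc' : |(z0.1*(finrank ℂ S.S0 : ℚ) + z0.2.1*(finrank ℂ S.S1 : ℚ)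
                + z0.2.2*(finrank ℂ S.Sinf : ℚ))
              - (ζ.1*(finrank ℂ S.S0 : ℚ) + ζ.2.1*(finrank ℂ S.S1 : ℚ)
                + ζ.2.2*(finrank ℂ S.Sinf : ℚ))|
              / ((finrank ℂ S.S0 : ℚ) + (finrank ℂ S.S1 : ℚ) + (finrank ℂ S.Sinf : ℚ))
            + (SL + SR)
            < |z0.1*(finrank ℂ S.S0 : ℚ) + z0.2.1*(finrank ℂ S.S1 : ℚ)
                + z0.2.2*(finrank ℂ S.Sinf : ℚ)|
              / ((finrank ℂ S.S0 : ℚ) + (finrank ℂ S.S1 : ℚ) + (finrank ℂ S.Sinf : ℚ)) := hcc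
        have hρ1 : (1:ℚ) ≤ (finrank ℂ S.S0 : ℚ) + (finrank ℂ S.S1 : ℚ)
            + (finrank ℂ S.Sinf : ℚ) := by
          have h4 : (1:ℚ) ≤ ((finrank ℂ S.S0 + finrank ℂ S.S1 + finrank ℂ S.Sinf : ℕ) : ℚ) := by
            exact_mod_cast hge1
          push_cast at h4
          linarith
        exact off_wall_lt' hρ1 hrk1 hStpos hzneg hcc' (hsd_nonneg S) (hsd_le S)
    · -- case S∞ = V∞
      have hSinf : S.Sinf = ⊤ := Submodule.eq_top_of_finrank_eq (by rw [hE, hVinf])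
      have hEq : ((finrank ℂ S.Sinf : ℕ) : ℚ) = 1 := by rw [hE]; norm_num
      have hml2 := ML2 S hSinf
      rw [hV0, hV1] at hml2
      have hml : ((m:ℚ)+1) * ((v0:ℚ) - (finrank ℂ S.S0 : ℚ))
          ≤ (m:ℚ) * ((v1:ℚ) - (finrank ℂ S.S1 : ℚ)) := by exact_mod_cast hml2
      by_cases hwq2 : ((m:ℚ)+1) * ((v0:ℚ) - (finrank ℂ S.S0 : ℚ))
          = (m:ℚ) * ((v1:ℚ) - (finrank ℂ S.S1 : ℚ))
      · -- on the wall
        have hml4 : ¬ F ℓ ≤ S.S1 := by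
          apply ML4 S hprop hSinf
          rw [hV0, hV1]
          exact_mod_cast hwq2
        have hltl : S.S1 ⊓ F ℓ < F ℓ :=
          lt_of_le_of_ne inf_le_right (fun hEq2 => hml4 (hEq2 ▸ inf_le_left))
        have hdl : finrank ℂ ↥(S.S1 ⊓ F ℓ) < ℓ := by
          have h5 := Submodule.finrank_lt_finrank_of_lt hltl
          rwa [hF.dim ℓ hl2] at h5
        have hdlq : ((finrank ℂ ↥(S.S1 ⊓ F ℓ)) : ℚ) + 1 ≤ (ℓ:ℚ) := by exact_mod_cast hdl
        clear hml4 hltl hdl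
        have hsd4 : (∑ k ∈ Finset.Icc 1 v1, n k * ((finrank ℂ ↥(S.S1 ⊓ F k)) : ℚ)) + n ℓ
            ≤ SL + SR := by
          rw [← htot]
          have hnl : n ℓ = ∑ k ∈ Finset.Icc 1 v1, (if k = ℓ then n ℓ else 0) := by
            rw [Finset.sum_ite_eq' (Finset.Icc 1 v1) ℓ (fun _ => n ℓ), if_pos hℓ]
          rw [hnl, ← Finset.sum_add_distrib]
          apply Finset.sum_le_sum
          intro k hk
          have hk2 : k ≤ v1 := (Finset.mem_Icc.mp hk).2
          by_cases hkl : k = ℓ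
          · subst hkl
            rw [if_pos rfl]
            nlinarith [hn k hk, hdlq]
          · rw [if_neg hkl, add_zero]
            have hdk : ((finrank ℂ ↥(S.S1 ⊓ F k)) : ℚ) ≤ (k : ℚ) := by
              exact_mod_cast hd_le S.S1 k hk2
            nlinarith [hn k hk]
        have hwq2' : (m:ℚ)*((v1:ℚ) - (finrank ℂ S.S1 : ℚ))
            = ((m:ℚ)+1)*((v0:ℚ) - (finrank ℂ S.S0 : ℚ)) := hwq2.symm
        have hwid2 := wall_id' m ζ.1 ζ.2.1 ((v0:ℚ) - (finrank ℂ S.S0 : ℚ))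
          ((v1:ℚ) - (finrank ℂ S.S1 : ℚ)) Bc rkQ hwq2' hBmul
        have hident : ζ.1*(finrank ℂ S.S0 : ℚ) + ζ.2.1*(finrank ℂ S.S1 : ℚ) + ζ.2.2*1
            = -(ζ.1*((v0:ℚ) - (finrank ℂ S.S0 : ℚ))
              + ζ.2.1*((v1:ℚ) - (finrank ℂ S.S1 : ℚ))) := by
          linear_combination ha
        have hident_rk : (ζ.1*(finrank ℂ S.S0 : ℚ) + ζ.2.1*(finrank ℂ S.S1 : ℚ) + ζ.2.2*1) * rkQ
            = -((((v0:ℚ) - (finrank ℂ S.S0 : ℚ)) + ((v1:ℚ) - (finrank ℂ S.S1 : ℚ))) * Bc) := by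
          linear_combination rkQ * hident - hwid2
        have fR : (SL+SR)*((finrank ℂ S.S0 : ℚ) + (finrank ℂ S.S1 : ℚ) + 1)
            = (SL+SR)*rkQ
              - (SL+SR)*((((v0:ℚ) - (finrank ℂ S.S0 : ℚ)) + ((v1:ℚ) - (finrank ℂ S.S1 : ℚ)))) := by
          rw [hrkQdef]; ring
        have f0 : 0 ≤ (rkQ - 1) * SR := mul_nonneg (by linarith) hSRnn
        have hXlt : SL - Bc + SR < n ℓ := by linarith
        have f2 : rkQ*(SL - Bc + SR) < rkQ*(n ℓ) := mul_lt_mul_of_pos_left hXlt hrkQpos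
        have f1 : 0 ≤ (rkQ - (((v0:ℚ) - (finrank ℂ S.S0 : ℚ))
            + ((v1:ℚ) - (finrank ℂ S.S1 : ℚ)))) * (SL - Bc + SR) := by
          apply mul_nonneg
          · rw [hrkQdef]; linarith
          · linarith
        have f3 : (∑ k ∈ Finset.Icc 1 v1, n k * ((finrank ℂ ↥(S.S1 ⊓ F k)) : ℚ)) * rkQ
            ≤ (SL + SR - n ℓ) * rkQ :=
          mul_le_mul_of_nonneg_right (by linarith) hrkQpos.le
        rw [hEq]
        linarith [hident_rk, fR, f1, f2, f3]
      · -- off the wall, S∞ = V∞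
        have hmlt : ((m:ℚ)+1) * ((v0:ℚ) - (finrank ℂ S.S0 : ℚ))
            < (m:ℚ) * ((v1:ℚ) - (finrank ℂ S.S1 : ℚ)) := lt_of_le_of_ne hml hwq2
        have h1 : ((m:ℚ)+1)*(z0.1*((v0:ℚ) - (finrank ℂ S.S0 : ℚ))
              + z0.2.1*((v1:ℚ) - (finrank ℂ S.S1 : ℚ)))
            = z0.1*(((m:ℚ)+1)*((v0:ℚ) - (finrank ℂ S.S0 : ℚ))
              - (m:ℚ)*((v1:ℚ) - (finrank ℂ S.S1 : ℚ))) := by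
          linear_combination ((v1:ℚ) - (finrank ℂ S.S1 : ℚ)) * hwall
        have h2 : 0 < z0.1*(((m:ℚ)+1)*((v0:ℚ) - (finrank ℂ S.S0 : ℚ))
            - (m:ℚ)*((v1:ℚ) - (finrank ℂ S.S1 : ℚ))) :=
          mul_pos_of_neg_of_neg hz0 (by linarith)
        have h3 : 0 < z0.1*((v0:ℚ) - (finrank ℂ S.S0 : ℚ))
            + z0.2.1*((v1:ℚ) - (finrank ℂ S.S1 : ℚ)) :=
          pos_of_nat_mul' (m := m) (by linarith)
        have hid0 : z0.1*(finrank ℂ S.S0 : ℚ) + z0.2.1*(finrank ℂ S.S1 : ℚ)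
              + z0.2.2*(finrank ℂ S.Sinf : ℚ)
            = -(z0.1*((v0:ℚ) - (finrank ℂ S.S0 : ℚ))
              + z0.2.1*((v1:ℚ) - (finrank ℂ S.S1 : ℚ))) := by
          linear_combination hnorm + z0.2.2 * hEq
        have hzneg : z0.1*(finrank ℂ S.S0 : ℚ) + z0.2.1*(finrank ℂ S.S1 : ℚ)
            + z0.2.2*(finrank ℂ S.Sinf : ℚ) < 0 := by rw [hid0]; linarith
        have hmem : ((finrank ℂ S.S0, finrank ℂ S.S1, finrank ℂ S.Sinf) : ℕ×ℕ×ℕ)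
            ∈ Dset v0 v1 z0 := by
          simp only [Dset, Finset.mem_filter, Finset.mem_product, Finset.mem_Iic]
          refine ⟨⟨hA0, hB0, hE0⟩, ?_, ?_⟩
          · intro hcontra
            rw [Prod.ext_iff, Prod.ext_iff] at hcontra
            simp only at hcontra
            omega
          · show zdot z0 _ ≠ 0
            exact ne_of_lt hzneg
        have hcc := hc _ hmem _ hmem
        rw [htot] at hcc
        have hcc' : |(z0.1*(finrank ℂ S.S0 : ℚ) + z0.2.1*(finrank ℂ S.S1 : ℚ)
                + z0.2.2*(finrank ℂ S.Sinf : ℚ))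
              - (ζ.1*(finrank ℂ S.S0 : ℚ) + ζ.2.1*(finrank ℂ S.S1 : ℚ)
                + ζ.2.2*(finrank ℂ S.Sinf : ℚ))|
              / ((finrank ℂ S.S0 : ℚ) + (finrank ℂ S.S1 : ℚ) + (finrank ℂ S.Sinf : ℚ))
            + (SL + SR)
            < |z0.1*(finrank ℂ S.S0 : ℚ) + z0.2.1*(finrank ℂ S.S1 : ℚ)
                + z0.2.2*(finrank ℂ S.Sinf : ℚ)|
              / ((finrank ℂ S.S0 : ℚ) + (finrank ℂ S.S1 : ℚ) + (finrank ℂ S.Sinf : ℚ)) := hcc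
        have hρ1 : (1:ℚ) ≤ (finrank ℂ S.S0 : ℚ) + (finrank ℂ S.S1 : ℚ)
            + (finrank ℂ S.Sinf : ℚ) := by rw [hEq]; linarith
        exact off_wall_lt' hρ1 hrk1 hStpos hzneg hcc' (hsd_nonneg S) (hsd_le S)
  · -- (ζ,n)-stable → (m,ℓ)-stable
    intro hPS
    refine ⟨?_, ?_, ?_, ?_⟩
    · -- condition 1a
      intro S hSinf
      by_cases hB0 : finrank ℂ S.S1 = 0
      · rw [hB0]
        push_cast
        positivity
      · have hnz : S.IsNonzero :=
          Or.inr (Or.inl (fun h => hB0 (by rw [h, finrank_bot])))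
        have hprop : S.IsProper := Or.inr (Or.inr (by rw [hSinf]; exact hbotne))
        have hnum := (key S hnz).mp (hPS S hnz hprop)
        by_contra hcon
        push_neg at hcon
        have hconq : ((m:ℚ)+1)*(finrank ℂ S.S0 : ℚ) < (m:ℚ)*(finrank ℂ S.S1 : ℚ) := by
          exact_mod_cast hcon
        have hEq : ((finrank ℂ S.Sinf : ℕ) : ℚ) = 0 := by
          rw [hSinf, finrank_bot]; norm_num
        have h1 : ((m:ℚ)+1)*(z0.1*(finrank ℂ S.S0 : ℚ) + z0.2.1*(finrank ℂ S.S1 : ℚ))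
            = z0.1*(((m:ℚ)+1)*(finrank ℂ S.S0 : ℚ) - (m:ℚ)*(finrank ℂ S.S1 : ℚ)) := by
          linear_combination ((finrank ℂ S.S1 : ℕ) : ℚ) * hwall
        have h2 : 0 < z0.1*(((m:ℚ)+1)*(finrank ℂ S.S0 : ℚ) - (m:ℚ)*(finrank ℂ S.S1 : ℚ)) :=
          mul_pos_of_neg_of_neg hz0 (by linarith)
        have h3 : 0 < z0.1*(finrank ℂ S.S0 : ℚ) + z0.2.1*(finrank ℂ S.S1 : ℚ) :=
          pos_of_nat_mul' (m := m) (by linarith)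
        have hzpos : 0 < z0.1*(finrank ℂ S.S0 : ℚ) + z0.2.1*(finrank ℂ S.S1 : ℚ)
            + z0.2.2*(finrank ℂ S.Sinf : ℚ) := by rw [hEq]; linarith
        have hA0 : finrank ℂ S.S0 ≤ v0 := hV0 ▸ Submodule.finrank_le _
        have hB0' : finrank ℂ S.S1 ≤ v1 := hV1 ▸ Submodule.finrank_le _
        have hE0 : finrank ℂ S.Sinf ≤ 1 := hVinf ▸ Submodule.finrank_le _
        have hmem : ((finrank ℂ S.S0, finrank ℂ S.S1, finrank ℂ S.Sinf) : ℕ×ℕ×ℕ)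
            ∈ Dset v0 v1 z0 := by
          simp only [Dset, Finset.mem_filter, Finset.mem_product, Finset.mem_Iic]
          refine ⟨⟨hA0, hB0', hE0⟩, ?_, ?_⟩
          · intro hcontra
            rw [Prod.ext_iff, Prod.ext_iff] at hcontra
            simp only at hcontra
            omega
          · show zdot z0 _ ≠ 0
            exact ne_of_gt hzpos
        have hcc := hc _ hmem _ hmem
        rw [htot] at hcc
        have hcc' : |(z0.1*(finrank ℂ S.S0 : ℚ) + z0.2.1*(finrank ℂ S.S1 : ℚ)
                + z0.2.2*(finrank ℂ S.Sinf : ℚ))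
              - (ζ.1*(finrank ℂ S.S0 : ℚ) + ζ.2.1*(finrank ℂ S.S1 : ℚ)
                + ζ.2.2*(finrank ℂ S.Sinf : ℚ))|
              / ((finrank ℂ S.S0 : ℚ) + (finrank ℂ S.S1 : ℚ) + (finrank ℂ S.Sinf : ℚ))
            + (SL + SR)
            < |z0.1*(finrank ℂ S.S0 : ℚ) + z0.2.1*(finrank ℂ S.S1 : ℚ)
                + z0.2.2*(finrank ℂ S.Sinf : ℚ)|
              / ((finrank ℂ S.S0 : ℚ) + (finrank ℂ S.S1 : ℚ) + (finrank ℂ S.Sinf : ℚ)) := hcc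
        have hρpos : (0:ℚ) < (finrank ℂ S.S0 : ℚ) + (finrank ℂ S.S1 : ℚ)
            + (finrank ℂ S.Sinf : ℚ) := by
          have h4 : 1 ≤ finrank ℂ S.S1 := Nat.pos_of_ne_zero hB0
          have h5 : (1:ℚ) ≤ (finrank ℂ S.S1 : ℚ) := by exact_mod_cast h4
          have h6 : (0:ℚ) ≤ (finrank ℂ S.S0 : ℚ) := Nat.cast_nonneg _
          have h7 : (0:ℚ) ≤ (finrank ℂ S.Sinf : ℚ) := Nat.cast_nonneg _
          linarith
        exact pos_case_keep' hρpos hrk1 hStpos hzpos hcc' (hsd_nonneg S) hnum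
    · -- condition 1b
      intro S hSinf
      rw [hV0, hV1]
      have hE1 : finrank ℂ S.Sinf = 1 := by rw [hSinf, finrank_top, hVinf]
      have hA0 : finrank ℂ S.S0 ≤ v0 := hV0 ▸ Submodule.finrank_le _
      have hB0 : finrank ℂ S.S1 ≤ v1 := hV1 ▸ Submodule.finrank_le _
      by_cases hAv : finrank ℂ S.S0 = v0
      · rw [hAv]
        have h4 : ((finrank ℂ S.S1 : ℕ) : ℤ) ≤ (v1:ℤ) := by exact_mod_cast hB0
        have h5 : (0:ℤ) ≤ (m:ℤ) := Int.natCast_nonneg m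
        nlinarith
      · have hprop : S.IsProper :=
          Or.inl (fun h => hAv (by rw [h, finrank_top, hV0]))
        have hnz : S.IsNonzero := Or.inr (Or.inr (by rw [hSinf]; exact fun h => hbotne h.symm))
        have hnum := (key S hnz).mp (hPS S hnz hprop)
        by_contra hcon
        push_neg at hcon
        have hconq : (m:ℚ)*((v1:ℚ) - (finrank ℂ S.S1 : ℚ))
            < ((m:ℚ)+1)*((v0:ℚ) - (finrank ℂ S.S0 : ℚ)) := by exact_mod_cast hcon
        have hEq : ((finrank ℂ S.Sinf : ℕ) : ℚ) = 1 := by rw [hE1]; norm_num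
        have h1 : ((m:ℚ)+1)*(z0.1*((v0:ℚ) - (finrank ℂ S.S0 : ℚ))
              + z0.2.1*((v1:ℚ) - (finrank ℂ S.S1 : ℚ)))
            = z0.1*(((m:ℚ)+1)*((v0:ℚ) - (finrank ℂ S.S0 : ℚ))
              - (m:ℚ)*((v1:ℚ) - (finrank ℂ S.S1 : ℚ))) := by
          linear_combination ((v1:ℚ) - (finrank ℂ S.S1 : ℚ)) * hwall
        have h2 : z0.1*(((m:ℚ)+1)*((v0:ℚ) - (finrank ℂ S.S0 : ℚ))
            - (m:ℚ)*((v1:ℚ) - (finrank ℂ S.S1 : ℚ))) < 0 :=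
          mul_neg_of_neg_of_pos hz0 (by linarith)
        have h3 : z0.1*((v0:ℚ) - (finrank ℂ S.S0 : ℚ))
            + z0.2.1*((v1:ℚ) - (finrank ℂ S.S1 : ℚ)) < 0 :=
          lt_zero_of_nat_mul' (m := m) (by linarith)
        have hid0 : z0.1*(finrank ℂ S.S0 : ℚ) + z0.2.1*(finrank ℂ S.S1 : ℚ)
              + z0.2.2*(finrank ℂ S.Sinf : ℚ)
            = -(z0.1*((v0:ℚ) - (finrank ℂ S.S0 : ℚ))
              + z0.2.1*((v1:ℚ) - (finrank ℂ S.S1 : ℚ))) := by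
          linear_combination hnorm + z0.2.2 * hEq
        have hzpos : 0 < z0.1*(finrank ℂ S.S0 : ℚ) + z0.2.1*(finrank ℂ S.S1 : ℚ)
            + z0.2.2*(finrank ℂ S.Sinf : ℚ) := by rw [hid0]; linarith
        have hE0 : finrank ℂ S.Sinf ≤ 1 := hVinf ▸ Submodule.finrank_le _
        have hmem : ((finrank ℂ S.S0, finrank ℂ S.S1, finrank ℂ S.Sinf) : ℕ×ℕ×ℕ)
            ∈ Dset v0 v1 z0 := by
          simp only [Dset, Finset.mem_filter, Finset.mem_product, Finset.mem_Iic]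
          refine ⟨⟨hA0, hB0, hE0⟩, ?_, ?_⟩
          · intro hcontra
            rw [Prod.ext_iff, Prod.ext_iff] at hcontra
            simp only at hcontra
            omega
          · show zdot z0 _ ≠ 0
            exact ne_of_gt hzpos
        have hcc := hc _ hmem _ hmem
        rw [htot] at hcc
        have hcc' : |(z0.1*(finrank ℂ S.S0 : ℚ) + z0.2.1*(finrank ℂ S.S1 : ℚ)
                + z0.2.2*(finrank ℂ S.Sinf : ℚ))
              - (ζ.1*(finrank ℂ S.S0 : ℚ) + ζ.2.1*(finrank ℂ S.S1 : ℚ)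
                + ζ.2.2*(finrank ℂ S.Sinf : ℚ))|
              / ((finrank ℂ S.S0 : ℚ) + (finrank ℂ S.S1 : ℚ) + (finrank ℂ S.Sinf : ℚ))
            + (SL + SR)
            < |z0.1*(finrank ℂ S.S0 : ℚ) + z0.2.1*(finrank ℂ S.S1 : ℚ)
                + z0.2.2*(finrank ℂ S.Sinf : ℚ)|
              / ((finrank ℂ S.S0 : ℚ) + (finrank ℂ S.S1 : ℚ) + (finrank ℂ S.Sinf : ℚ)) := hcc
        have hρpos : (0:ℚ) < (finrank ℂ S.S0 : ℚ) + (finrank ℂ S.S1 : ℚ)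
            + (finrank ℂ S.Sinf : ℚ) := by
          have h6 : (0:ℚ) ≤ (finrank ℂ S.S0 : ℚ) := Nat.cast_nonneg _
          have h7 : (0:ℚ) ≤ (finrank ℂ S.S1 : ℚ) := Nat.cast_nonneg _
          rw [hEq] at *
          linarith [hEq]
        exact pos_case_keep' hρpos hrk1 hStpos hzpos hcc' (hsd_nonneg S) hnum
    · -- condition 2
      intro S hnz hSinf heq
      by_contra hne
      have hprop : S.IsProper := Or.inr (Or.inr (by rw [hSinf]; exact hbotne))
      have hnum := (key S hnz).mp (hPS S hnz hprop)
      have hEq : ((finrank ℂ S.Sinf : ℕ) : ℚ) = 0 := by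
        rw [hSinf, finrank_bot]; norm_num
      have hwq : (m:ℚ)*(finrank ℂ S.S1 : ℚ) = ((m:ℚ)+1)*(finrank ℂ S.S0 : ℚ) := by
        exact_mod_cast heq
      have hwid := wall_id' m ζ.1 ζ.2.1 (finrank ℂ S.S0 : ℚ) (finrank ℂ S.S1 : ℚ) Bc rkQ hwq hBmul
      have hdl1 : 1 ≤ finrank ℂ ↥(S.S1 ⊓ F ℓ) :=
        Nat.pos_of_ne_zero (fun h0 => hne (Submodule.finrank_eq_zero.mp h0))
      have hsge : n ℓ ≤ ∑ k ∈ Finset.Icc 1 v1, n k * ((finrank ℂ ↥(S.S1 ⊓ F k)) : ℚ) := by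
        have h1 : n ℓ * ((finrank ℂ ↥(S.S1 ⊓ F ℓ)) : ℚ)
            ≤ ∑ k ∈ Finset.Icc 1 v1, n k * ((finrank ℂ ↥(S.S1 ⊓ F k)) : ℚ) :=
          Finset.single_le_sum
            (fun k hk => mul_nonneg (hn k hk).le (Nat.cast_nonneg _)) hℓ
        have h2 : (1:ℚ) ≤ ((finrank ℂ ↥(S.S1 ⊓ F ℓ)) : ℚ) := by exact_mod_cast hdl1
        nlinarith [hn ℓ hℓ]
      have hA0 : finrank ℂ S.S0 ≤ v0 := hV0 ▸ Submodule.finrank_le _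
      have hB0 : finrank ℂ S.S1 ≤ v1 := hV1 ▸ Submodule.finrank_le _
      have hρle : (finrank ℂ S.S0 : ℚ) + (finrank ℂ S.S1 : ℚ) ≤ rkQ - 1 := by
        have h4 : ((finrank ℂ S.S0 : ℕ) : ℚ) ≤ (v0:ℚ) := by exact_mod_cast hA0
        have h5 : ((finrank ℂ S.S1 : ℕ) : ℚ) ≤ (v1:ℚ) := by exact_mod_cast hB0
        rw [hrkQdef]; linarith
      rw [hEq] at hnum
      have g1 : n ℓ * rkQ ≤ (∑ k ∈ Finset.Icc 1 v1, n k * ((finrank ℂ ↥(S.S1 ⊓ F k)) : ℚ)) * rkQ :=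
        mul_le_mul_of_nonneg_right hsge hrkQpos.le
      have g2 : 0 ≤ ((rkQ - 1) - ((finrank ℂ S.S0 : ℚ) + (finrank ℂ S.S1 : ℚ)))
          * (SL - Bc + SR) := mul_nonneg (by linarith) (by linarith)
      have g3 : rkQ*(SL - Bc + rkQ*SR) < rkQ*(n ℓ) :=
        mul_lt_mul_of_pos_left (by linarith) hrkQpos
      have g4 : 0 ≤ (rkQ*rkQ - rkQ + 1)*SR := by
        apply mul_nonneg _ hSRnn
        nlinarith [mul_nonneg (by linarith : (0:ℚ) ≤ rkQ) (by linarith : (0:ℚ) ≤ rkQ - 1)]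
      linarith [hnum, hwid, g1, g2, g3, g4, hd1, hSRnn]
    · -- condition 3
      intro S hprop hSinf heq
      intro hFle
      have hnz : S.IsNonzero := Or.inr (Or.inr (by rw [hSinf]; exact fun h => hbotne h.symm))
      have hnum := (key S hnz).mp (hPS S hnz hprop)
      have hE1 : finrank ℂ S.Sinf = 1 := by rw [hSinf, finrank_top, hVinf]
      have hEq : ((finrank ℂ S.Sinf : ℕ) : ℚ) = 1 := by rw [hE1]; norm_num
      rw [hV0, hV1] at heq
      have hwq2 : (m:ℚ)*((v1:ℚ) - (finrank ℂ S.S1 : ℚ))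
          = ((m:ℚ)+1)*((v0:ℚ) - (finrank ℂ S.S0 : ℚ)) := by exact_mod_cast heq.symm
      have hwid2 := wall_id' m ζ.1 ζ.2.1 ((v0:ℚ) - (finrank ℂ S.S0 : ℚ))
        ((v1:ℚ) - (finrank ℂ S.S1 : ℚ)) Bc rkQ hwq2 hBmul
      have hident : ζ.1*(finrank ℂ S.S0 : ℚ) + ζ.2.1*(finrank ℂ S.S1 : ℚ) + ζ.2.2*1
          = -(ζ.1*((v0:ℚ) - (finrank ℂ S.S0 : ℚ))
            + ζ.2.1*((v1:ℚ) - (finrank ℂ S.S1 : ℚ))) := by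
        linear_combination ha
      have hident_rk : (ζ.1*(finrank ℂ S.S0 : ℚ) + ζ.2.1*(finrank ℂ S.S1 : ℚ) + ζ.2.2*1) * rkQ
          = -((((v0:ℚ) - (finrank ℂ S.S0 : ℚ)) + ((v1:ℚ) - (finrank ℂ S.S1 : ℚ))) * Bc) := by
        linear_combination rkQ * hident - hwid2
      have hsge : SL ≤ ∑ k ∈ Finset.Icc 1 v1, n k * ((finrank ℂ ↥(S.S1 ⊓ F k)) : ℚ) := by
        rw [hsplit]
        have h1 : ∑ k ∈ Finset.Icc 1 ℓ, n k * ((finrank ℂ ↥(S.S1 ⊓ F k)) : ℚ) = SL := by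
          rw [hSLdef]
          apply Finset.sum_congr rfl
          intro k hk
          obtain ⟨hk1, hk2⟩ := Finset.mem_Icc.mp hk
          have hFk : S.S1 ⊓ F k = F k :=
            inf_eq_right.mpr (le_trans (hFmono ℓ hl2 k hk2) hFle)
          rw [hFk, hF.dim k (le_trans hk2 hl2), mul_comm]
        have h2 : 0 ≤ ∑ k ∈ Finset.Icc (ℓ+1) v1, n k * ((finrank ℂ ↥(S.S1 ⊓ F k)) : ℚ) := by
          apply Finset.sum_nonneg
          intro k hk
          obtain ⟨hk1, hk2⟩ := Finset.mem_Icc.mp hk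
          exact mul_nonneg (hn k (Finset.mem_Icc.mpr ⟨by omega, hk2⟩)).le (Nat.cast_nonneg _)
        linarith
      have hpq : (1:ℚ) ≤ ((v0:ℚ) - (finrank ℂ S.S0 : ℚ)) + ((v1:ℚ) - (finrank ℂ S.S1 : ℚ)) := by
        have h4 := hproper_lt S hprop hSinf
        have h5 : ((finrank ℂ S.S0 : ℕ) : ℚ) + ((finrank ℂ S.S1 : ℕ) : ℚ) + 1
            ≤ (v0:ℚ) + (v1:ℚ) := by exact_mod_cast h4
        linarith
      have fR : (SL+SR)*((finrank ℂ S.S0 : ℚ) + (finrank ℂ S.S1 : ℚ) + 1)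
          = (SL+SR)*rkQ
            - (SL+SR)*((((v0:ℚ) - (finrank ℂ S.S0 : ℚ)) + ((v1:ℚ) - (finrank ℂ S.S1 : ℚ)))) := by
        rw [hrkQdef]; ring
      have g1 : SL * rkQ ≤ (∑ k ∈ Finset.Icc 1 v1, n k * ((finrank ℂ ↥(S.S1 ⊓ F k)) : ℚ)) * rkQ :=
        mul_le_mul_of_nonneg_right hsge hrkQpos.le
      have g2 : 0 ≤ ((((v0:ℚ) - (finrank ℂ S.S0 : ℚ)) + ((v1:ℚ) - (finrank ℂ S.S1 : ℚ))) - 1)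
          * (SL - Bc + SR) := mul_nonneg (by linarith) (by linarith)
      clear hFle
      rw [hEq] at hnum
      linarith [hnum, hident_rk, fR, g1, g2, he1, hSRnn, hd1]
end

section
/- Assume the pair (ζ, n) satisfies condition (★) with respect to (m, v_0, v_1, ℓ, ζ⁰). Let X be an ADHM representation with dim V_∞ = 1, dim V_0 = v_0 and dim V_1 = v_1, and let F• be a full flag of V_1 of length N = v_1. If (X, F•) is (ζ,n)-semistable, then (X, F•) is (ζ,n)-stable. -/
open Module


/-!
Suppose a proper nonzero submodule `S` has the same slope as `X`, and let `s` be its dimension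
vector. The flag term `Σ nₖ dim (S₁ ∩ Fᵏ)` lies between `0` and `Σ i nᵢ`, so equality of slopes
gives `|ζ·s| ≤ rank s · Σ i nᵢ`; off the wall `ζ⁰·s = 0` this contradicts (c).

On the wall, `ζ⁰` is proportional to `(m + 1, -m)` on the `V₀, V₁` components, so either `S`
(if `S∞ = 0`) or `X/S` (if `S∞ = V∞`) has dimension vector proportional to `(m, m + 1, 0)`, and
`ζ` evaluates on it through `m ζ₀ + (m + 1) ζ₁` alone. Equality of slopes then puts the flag term
`Σ nₖ gₖ` of that representation (`0 ≤ gₖ ≤ k`) in the interval `(Σ_{i>ℓ} i nᵢ, n_ℓ)` by (e).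
But by (b) no such sum lies there: either `gₖ = 0` for all `k ≤ ℓ` and the sum is at most
`Σ_{i>ℓ} i nᵢ`, or it is at least `n_ℓ`.
-/

open Finset

theorem sum_Icc_one_eq_add_sum_Icc {M : Type*} [AddCommMonoid M] {ℓ N : ℕ} (h : ℓ ≤ N)
    (f : ℕ → M) :
    ∑ k ∈ Icc 1 N, f k = ∑ k ∈ Icc 1 ℓ, f k + ∑ k ∈ Icc (ℓ + 1) N, f k := by
  have hIcc : ∀ a b : ℕ, Ioc a b = Icc (a + 1) b := fun a b => (Icc_add_one_left_eq_Ioc a b).symm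
  simpa only [hIcc, zero_add] using (sum_Ioc_consecutive f (Nat.zero_le ℓ) h).symm

theorem one_le_srank {s : ℕ × ℕ × ℕ} (hs : s ≠ (0, 0, 0)) : 1 ≤ srank s := by
  obtain ⟨s0, s1, si⟩ := s
  have : 1 ≤ s0 + s1 + si := by
    by_contra h
    exact hs (by simp only [Prod.mk.injEq]; omega)
  unfold srank
  exact_mod_cast this

theorem antitoneOn_of_sum_Icc_lt {N : ℕ} {n : ℕ → ℚ} (hn : ∀ k ∈ Icc 1 N, 0 ≤ n k)
    (hdom : ∀ k ∈ Icc 1 (N - 1), ∑ i ∈ Icc (k + 1) N, (i : ℚ) * n i < n k) :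
    AntitoneOn n (Set.Icc 1 N) := by
  intro a ha b hb hab
  rcases hab.eq_or_lt with rfl | hlt
  · rfl
  have hbN : b ∈ Icc 1 N := mem_Icc.mpr hb
  calc n b ≤ b * n b := le_mul_of_one_le_left (hn b hbN) (by exact_mod_cast hb.1)
    _ ≤ ∑ i ∈ Icc (a + 1) N, (i : ℚ) * n i :=
        single_le_sum (f := fun i : ℕ => (i : ℚ) * n i)
          (fun i hi => mul_nonneg i.cast_nonneg
            (hn i (mem_Icc.mpr ⟨by linarith [(mem_Icc.mp hi).1, ha.1], (mem_Icc.mp hi).2⟩)))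
          (mem_Icc.mpr ⟨hlt, hb.2⟩)
    _ ≤ n a := (hdom a (mem_Icc.mpr ⟨ha.1, by have := hb.2; omega⟩)).le

theorem weightedSum_notMem_Ioo {N ℓ : ℕ} {n : ℕ → ℚ} (hn : ∀ k ∈ Icc 1 N, 0 ≤ n k)
    (hanti : AntitoneOn n (Set.Icc 1 N)) (hℓ : ℓ ∈ Icc 1 N) {g : ℕ → ℕ}
    (hg : ∀ k ∈ Icc 1 N, g k ≤ k) :
    ∑ k ∈ Icc 1 N, n k * g k ∉ Set.Ioo (∑ k ∈ Icc (ℓ + 1) N, (k : ℚ) * n k) (n ℓ) := by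
  rintro ⟨hlow, hup⟩
  have hℓN := (mem_Icc.mp hℓ).2
  by_cases hvanish : ∀ k ∈ Icc 1 ℓ, g k = 0
  · refine hlow.not_ge ?_
    rw [sum_Icc_one_eq_add_sum_Icc hℓN, sum_eq_zero fun k hk => by simp [hvanish k hk], zero_add]
    refine sum_le_sum fun k hk => ?_
    have hkN : k ∈ Icc 1 N := mem_Icc.mpr ⟨by linarith [(mem_Icc.mp hk).1], (mem_Icc.mp hk).2⟩
    rw [mul_comm]
    exact mul_le_mul_of_nonneg_right (by exact_mod_cast hg k hkN) (hn k hkN)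
  · push Not at hvanish
    obtain ⟨k, hk, hgk⟩ := hvanish
    have hkN : k ∈ Icc 1 N := mem_Icc.mpr ⟨(mem_Icc.mp hk).1, (mem_Icc.mp hk).2.trans hℓN⟩
    refine hup.not_ge ?_
    calc n ℓ ≤ n k := hanti (mem_Icc.mp hkN) (mem_Icc.mp hℓ) (mem_Icc.mp hk).2
      _ ≤ n k * g k :=
          le_mul_of_one_le_right (hn k hkN) (by exact_mod_cast Nat.one_le_iff_ne_zero.mpr hgk)
      _ ≤ ∑ k ∈ Icc 1 N, n k * g k :=
          single_le_sum (f := fun k => n k * g k)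
            (fun i hi => mul_nonneg (hn i hi) (Nat.cast_nonneg _)) hkN

theorem mem_Ioo_of_mul_eq_mul_add {c σ A T L ν : ℚ} (hσ1 : 1 ≤ σ) (hσc : σ ≤ c) (hT : 0 ≤ T)
    (hA : c * T < A) (hAν : c * T < ν - A) (h : c * L = σ * (A + T)) : L ∈ Set.Ioo T ν := by
  have hc : 0 < c := by linarith
  have hAT : 0 ≤ A + T := by nlinarith
  constructor
  · refine lt_of_mul_lt_mul_left ?_ hc.le
    nlinarith
  · have hTc : T ≤ c * T := le_mul_of_one_le_left hT (hσ1.trans hσc)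
    refine lt_of_mul_lt_mul_left ?_ hc.le
    nlinarith [mul_le_mul_of_nonneg_right hσc hAT]

theorem abs_le_mul_of_mul_add_eq {c R z S T : ℚ} (hc : 1 ≤ c) (hR : 1 ≤ R) (hS : 0 ≤ S)
    (hST : S ≤ T) (h : c * (z + S) = R * T) : |z| ≤ R * T := by
  have hRT : 0 ≤ (R - 1) * T := mul_nonneg (by linarith) (hS.trans hST)
  have hcRT : 0 ≤ (c - 1) * (R * T) := mul_nonneg (by linarith) (by nlinarith)
  rw [abs_le]
  constructor <;> refine le_of_mul_le_mul_left ?_ (by linarith : (0 : ℚ) < c) <;> nlinarith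

theorem wall_pairing_eq {m : ℕ} {z0 : ℚ × ℚ × ℚ} (hz0 : z0.1 ≠ 0)
    (hwall : (m : ℚ) * z0.1 + ((m : ℚ) + 1) * z0.2.1 = 0) {a b : ℚ}
    (hab : z0.1 * a + z0.2.1 * b = 0) (ζ : ℚ × ℚ × ℚ) :
    ζ.1 * a + ζ.2.1 * b = (a + b) / (2 * m + 1) * (m * ζ.1 + (m + 1) * ζ.2.1) := by
  have hprop : ((m : ℚ) + 1) * a = m * b := by
    have : z0.1 * (((m : ℚ) + 1) * a - m * b) = 0 := by
      linear_combination ((m : ℚ) + 1) * hab - b * hwall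
    linarith [(mul_eq_zero.mp this).resolve_left hz0]
  field_simp
  linear_combination (ζ.1 - ζ.2.1) * hprop

namespace SatisfiesStar

variable {m v0 v1 ℓ : ℕ} {z0 ζ : ℚ × ℚ × ℚ} {n : ℕ → ℚ}

theorem antitoneOn (hstar : SatisfiesStar m v0 v1 ℓ z0 ζ n) (hn : ∀ k ∈ Icc 1 v1, 0 ≤ n k) :
    AntitoneOn n (Set.Icc 1 v1) := by
  refine antitoneOn_of_sum_Icc_lt hn fun k hk => ?_
  obtain ⟨hlt, hpos⟩ := hstar.2.1 k hk
  have hrk : (1 : ℚ) ≤ v0 + v1 + 1 := le_add_of_nonneg_left (by positivity)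
  have htail := pos_of_mul_pos_right hpos (by linarith)
  exact (le_mul_of_one_le_left htail.le hrk).trans_lt hlt

theorem srank_mul_lt_abs_zdot (hstar : SatisfiesStar m v0 v1 ℓ z0 ζ n) {s : ℕ × ℕ × ℕ}
    (hs : s ∈ Dset v0 v1 z0) : srank s * ∑ i ∈ Icc 1 v1, (i : ℚ) * n i < |zdot ζ s| := by
  have hR : 0 < srank s := zero_lt_one.trans_le (one_le_srank (mem_filter.mp hs).2.1)
  have hc := hstar.2.2.1 s hs s hs
  have htri : |zdot z0 s| ≤ |zdot z0 s - zdot ζ s| + |zdot ζ s| := by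
    linarith [abs_sub_abs_le_abs_sub (zdot z0 s) (zdot ζ s)]
  rw [← lt_div_iff₀' hR]
  have := div_le_div_of_nonneg_right htri hR.le
  rw [add_div] at this
  linarith

theorem rk_mul_weightedSum_ne (hstar : SatisfiesStar m v0 v1 ℓ z0 ζ n)
    (hn : ∀ k ∈ Icc 1 v1, 0 ≤ n k) (hℓ : ℓ ∈ Icc 1 v1) {σ : ℚ} (hσ1 : 1 ≤ σ)
    (hσ : σ ≤ v0 + v1 + 1) {g : ℕ → ℕ} (hg : ∀ k ∈ Icc 1 v1, g k ≤ k) :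
    ((v0 : ℚ) + v1 + 1) * ∑ k ∈ Icc 1 v1, n k * g k ≠
      σ * (∑ i ∈ Icc 1 v1, (i : ℚ) * n i
        - ((v0 : ℚ) + v1 + 1) / (2 * m + 1) * (m * ζ.1 + (m + 1) * ζ.2.1)) := by
  intro h
  have he := lt_min_iff.mp hstar.2.2.2.2
  have htail : 0 ≤ ∑ i ∈ Icc (ℓ + 1) v1, (i : ℚ) * n i :=
    sum_nonneg fun i hi => mul_nonneg i.cast_nonneg
      (hn i (mem_Icc.mpr ⟨by linarith [(mem_Icc.mp hi).1], (mem_Icc.mp hi).2⟩))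
  have hsplit := sum_Icc_one_eq_add_sum_Icc (mem_Icc.mp hℓ).2 fun i => (i : ℚ) * n i
  refine weightedSum_notMem_Ioo hn (hstar.antitoneOn hn) hℓ hg
    (mem_Ioo_of_mul_eq_mul_add hσ1 hσ htail he.1 (by linarith [he.2]) ?_)
  linear_combination h + σ * hsplit

theorem slope_ne_of_sub_wall (hstar : SatisfiesStar m v0 v1 ℓ z0 ζ n) (hz0 : z0.1 ≠ 0)
    (hwall : (m : ℚ) * z0.1 + ((m : ℚ) + 1) * z0.2.1 = 0) (hn : ∀ k ∈ Icc 1 v1, 0 ≤ n k)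
    (hℓ : ℓ ∈ Icc 1 v1) {s0 s1 : ℕ} (hs0 : s0 ≤ v0) (hs1 : s1 ≤ v1) (hpos : 1 ≤ s0 + s1)
    (hD : zdot z0 (s0, s1, 0) = 0) {f : ℕ → ℕ} (hf : ∀ k ∈ Icc 1 v1, f k ≤ k) :
    ((v0 : ℚ) + v1 + 1) * (zdot ζ (s0, s1, 0) + ∑ k ∈ Icc 1 v1, n k * f k) ≠
      srank (s0, s1, 0) * ∑ i ∈ Icc 1 v1, (i : ℚ) * n i := by
  intro h
  have hw := wall_pairing_eq hz0 hwall (a := s0) (b := s1) (by simpa [zdot] using hD) ζ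
  refine hstar.rk_mul_weightedSum_ne hn hℓ (σ := s0 + s1) (by exact_mod_cast hpos) ?_ hf ?_
  · have : (s0 : ℚ) ≤ v0 := by exact_mod_cast hs0
    have : (s1 : ℚ) ≤ v1 := by exact_mod_cast hs1
    linarith
  · simp only [zdot, srank, Nat.cast_zero, mul_zero, add_zero] at h
    linear_combination h - ((v0 : ℚ) + v1 + 1) * hw

theorem slope_ne_of_quot_wall (hstar : SatisfiesStar m v0 v1 ℓ z0 ζ n) (hz0 : z0.1 ≠ 0)
    (hwall : (m : ℚ) * z0.1 + ((m : ℚ) + 1) * z0.2.1 = 0)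
    (hnorm : z0.1 * (v0 : ℚ) + z0.2.1 * (v1 : ℚ) + z0.2.2 = 0) (hn : ∀ k ∈ Icc 1 v1, 0 ≤ n k)
    (hℓ : ℓ ∈ Icc 1 v1) {s0 s1 : ℕ} (hs0 : s0 ≤ v0) (hs1 : s1 ≤ v1) (hlt : s0 + s1 < v0 + v1)
    (hD : zdot z0 (s0, s1, 1) = 0) {f : ℕ → ℕ} (hf : ∀ k ∈ Icc 1 v1, f k ≤ k) :
    ((v0 : ℚ) + v1 + 1) * (zdot ζ (s0, s1, 1) + ∑ k ∈ Icc 1 v1, n k * f k) ≠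
      srank (s0, s1, 1) * ∑ i ∈ Icc 1 v1, (i : ℚ) * n i := by
  intro h
  -- the wall estimate is applied to the quotient `X/S`, whose flag dimensions are `k - f k`
  simp only [zdot, srank, Nat.cast_one, mul_one] at h hD
  have hab : z0.1 * (v0 - s0) + z0.2.1 * (v1 - s1) = 0 := by linear_combination hnorm - hD
  have hw := wall_pairing_eq hz0 hwall hab ζ
  have hcompl : ∑ k ∈ Icc 1 v1, n k * ((k - f k : ℕ) : ℚ) =
      ∑ i ∈ Icc 1 v1, (i : ℚ) * n i - ∑ k ∈ Icc 1 v1, n k * f k := by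
    rw [← sum_sub_distrib]
    refine sum_congr rfl fun k hk => ?_
    rw [Nat.cast_sub (hf k hk)]
    ring
  have hs0' : (s0 : ℚ) ≤ v0 := by exact_mod_cast hs0
  have hs1' : (s1 : ℚ) ≤ v1 := by exact_mod_cast hs1
  refine hstar.rk_mul_weightedSum_ne hn hℓ (σ := (v0 - s0) + (v1 - s1)) ?_ ?_
    (g := fun k => k - f k) (fun k _ => Nat.sub_le k (f k)) ?_
  · have : (s0 : ℚ) + s1 + 1 ≤ v0 + v1 := by exact_mod_cast hlt
    linarith
  · linarith [s0.cast_nonneg (α := ℚ), s1.cast_nonneg (α := ℚ)]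
  · rw [hcompl]
    linear_combination -h + ((v0 : ℚ) + v1 + 1) * hstar.1 - ((v0 : ℚ) + v1 + 1) * hw

theorem slope_ne (hstar : SatisfiesStar m v0 v1 ℓ z0 ζ n) (hz0 : z0.1 ≠ 0)
    (hwall : (m : ℚ) * z0.1 + ((m : ℚ) + 1) * z0.2.1 = 0)
    (hnorm : z0.1 * (v0 : ℚ) + z0.2.1 * (v1 : ℚ) + z0.2.2 = 0) (hn : ∀ k ∈ Icc 1 v1, 0 ≤ n k)
    (hℓ : ℓ ∈ Icc 1 v1) {s : ℕ × ℕ × ℕ} (hpos : 0 < s) (hlt : s < (v0, v1, 1)) {f : ℕ → ℕ}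
    (hf : ∀ k ∈ Icc 1 v1, f k ≤ k) :
    ((v0 : ℚ) + v1 + 1) * (zdot ζ s + ∑ k ∈ Icc 1 v1, n k * f k) ≠
      srank s * ∑ i ∈ Icc 1 v1, (i : ℚ) * n i := by
  have hne0 : s ≠ (0, 0, 0) := hpos.ne'
  have hsv : s ≤ (v0, v1, 1) := hlt.le
  by_cases hD : zdot z0 s = 0
  · obtain ⟨s0, s1, si⟩ := s
    obtain ⟨hs0, hs1, hsi⟩ : s0 ≤ v0 ∧ s1 ≤ v1 ∧ si ≤ 1 := hsv
    have hnev := hlt.ne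
    simp only [ne_eq, Prod.mk.injEq] at hne0 hnev
    interval_cases si
    · exact hstar.slope_ne_of_sub_wall hz0 hwall hn hℓ hs0 hs1 (by omega) hD hf
    · exact hstar.slope_ne_of_quot_wall hz0 hwall hnorm hn hℓ hs0 hs1 (by omega) hD hf
  · intro h
    have hsD : s ∈ Dset v0 v1 z0 :=
      mem_filter.mpr ⟨mem_product.mpr ⟨mem_Iic.mpr hsv.1, mem_product.mpr
        ⟨mem_Iic.mpr hsv.2.1, mem_Iic.mpr hsv.2.2⟩⟩, hne0, hD⟩
    have hSS : 0 ≤ ∑ k ∈ Icc 1 v1, n k * f k :=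
      sum_nonneg fun k hk => mul_nonneg (hn k hk) (Nat.cast_nonneg _)
    have hST : ∑ k ∈ Icc 1 v1, n k * f k ≤ ∑ i ∈ Icc 1 v1, (i : ℚ) * n i :=
      sum_le_sum fun k hk => by
        rw [mul_comm (k : ℚ)]
        exact mul_le_mul_of_nonneg_left (by exact_mod_cast hf k hk) (hn k hk)
    have hrk : (1 : ℚ) ≤ v0 + v1 + 1 := le_add_of_nonneg_left (by positivity)
    linarith [hstar.srank_mul_lt_abs_zdot hsD,
      abs_le_mul_of_mul_add_eq hrk (one_le_srank hne0) hSS hST h]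

end SatisfiesStar

namespace ADHMSub

variable {r : ℕ} {V0 V1 Vinf : Type*} [AddCommGroup V0] [Module ℂ V0] [AddCommGroup V1]
  [Module ℂ V1] [AddCommGroup Vinf] [Module ℂ Vinf] {X : ADHMData r V0 V1 Vinf}

noncomputable def dimVec (S : ADHMSub X) : ℕ × ℕ × ℕ :=
  (finrank ℂ S.S0, finrank ℂ S.S1, finrank ℂ S.Sinf)

theorem mu_eq (ζ : ℚ × ℚ × ℚ) (n : ℕ → ℚ) (N : ℕ) (F : ℕ → Submodule ℂ V1)
    (S : ADHMSub X) :
    S.mu ζ n N F =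
      (zdot ζ S.dimVec + ∑ k ∈ Icc 1 N, n k * finrank ℂ ↥(S.S1 ⊓ F k)) / srank S.dimVec :=
  rfl

theorem IsNonzero.dimVec_pos [FiniteDimensional ℂ V0] [FiniteDimensional ℂ V1]
    [FiniteDimensional ℂ Vinf] {S : ADHMSub X} (h : S.IsNonzero) : 0 < S.dimVec := by
  refine lt_of_le_of_ne (Prod.le_def.mpr ⟨Nat.zero_le _, Nat.zero_le _, Nat.zero_le _⟩) ?_
  intro h0
  simp only [dimVec, Prod.ext_iff] at h0
  rcases h with h | h | h
  · exact h (Submodule.finrank_eq_zero.mp h0.1.symm)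
  · exact h (Submodule.finrank_eq_zero.mp h0.2.1.symm)
  · exact h (Submodule.finrank_eq_zero.mp h0.2.2.symm)

theorem IsProper.dimVec_lt [FiniteDimensional ℂ V0] [FiniteDimensional ℂ V1]
    [FiniteDimensional ℂ Vinf] {S : ADHMSub X} (h : S.IsProper) :
    S.dimVec < (finrank ℂ V0, finrank ℂ V1, finrank ℂ Vinf) := by
  refine lt_of_le_of_ne (Prod.le_def.mpr ⟨Submodule.finrank_le _, Submodule.finrank_le _,
    Submodule.finrank_le _⟩) ?_
  intro htop
  simp only [dimVec, Prod.ext_iff] at htop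
  rcases h with h | h | h
  · exact h (Submodule.eq_top_of_finrank_eq htop.1)
  · exact h (Submodule.eq_top_of_finrank_eq htop.2.1)
  · exact h (Submodule.eq_top_of_finrank_eq htop.2.2)

theorem finrank_inf_le [FiniteDimensional ℂ V1] {N : ℕ} {F : ℕ → Submodule ℂ V1}
    (hF : IsFullFlag N F) (S : ADHMSub X) {k : ℕ} (hk : k ≤ N) :
    finrank ℂ ↥(S.S1 ⊓ F k) ≤ k :=
  (Submodule.finrank_mono inf_le_right).trans (hF.dim k hk).le

end ADHMSub

theorem ADHMData.mu_top {r : ℕ} {V0 V1 Vinf : Type*} [AddCommGroup V0] [Module ℂ V0]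
    [AddCommGroup V1] [Module ℂ V1] [AddCommGroup Vinf] [Module ℂ Vinf]
    (X : ADHMData r V0 V1 Vinf) (ζ : ℚ × ℚ × ℚ) (n : ℕ → ℚ) {N : ℕ}
    {F : ℕ → Submodule ℂ V1} (hF : IsFullFlag N F) :
    X.top.mu ζ n N F =
      (zdot ζ (finrank ℂ V0, finrank ℂ V1, finrank ℂ Vinf) + ∑ i ∈ Icc 1 N, (i : ℚ) * n i) /
        srank (finrank ℂ V0, finrank ℂ V1, finrank ℂ Vinf) := by
  have hdim : X.top.dimVec = (finrank ℂ V0, finrank ℂ V1, finrank ℂ Vinf) :=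
    Prod.ext (finrank_top ℂ V0) (Prod.ext (finrank_top ℂ V1) (finrank_top ℂ Vinf))
  rw [ADHMSub.mu_eq, hdim]
  congr 2
  refine sum_congr rfl fun k hk => ?_
  rw [show X.top.S1 = ⊤ from rfl, top_inf_eq, hF.dim k (mem_Icc.mp hk).2, mul_comm]

theorem pairSemistable_implies_pairStable_general
    (r m v0 v1 ℓ : ℕ)
    (hℓ : ℓ ∈ Finset.Icc 1 v1)
    (z0 ζ : ℚ × ℚ × ℚ) (n : ℕ → ℚ)
    (hz0 : z0.1 < 0)
    (hwall : (m : ℚ) * z0.1 + ((m : ℚ) + 1) * z0.2.1 = 0)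
    (hnorm : z0.1 * (v0 : ℚ) + z0.2.1 * (v1 : ℚ) + z0.2.2 = 0)
    (hn : ∀ k ∈ Finset.Icc 1 v1, 0 < n k)
    (hstar : SatisfiesStar m v0 v1 ℓ z0 ζ n)
    {V0 V1 Vinf : Type*} [AddCommGroup V0] [Module ℂ V0] [FiniteDimensional ℂ V0]
    [AddCommGroup V1] [Module ℂ V1] [FiniteDimensional ℂ V1]
    [AddCommGroup Vinf] [Module ℂ Vinf] [FiniteDimensional ℂ Vinf]
    (X : ADHMData r V0 V1 Vinf)
    (hV0 : finrank ℂ V0 = v0) (hV1 : finrank ℂ V1 = v1) (hVinf : finrank ℂ Vinf = 1)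
    (F : ℕ → Submodule ℂ V1) (hF : IsFullFlag v1 F)
    (hss : PairSemistable X ζ n v1 F) :
    PairStable X ζ n v1 F := by
  intro S hnz hprop
  have hlt := hprop.dimVec_lt
  rw [hV0, hV1, hVinf] at hlt
  have hslope := hstar.slope_ne hz0.ne hwall hnorm (fun k hk => (hn k hk).le) hℓ
    hnz.dimVec_pos hlt (fun k hk => S.finrank_inf_le hF (mem_Icc.mp hk).2)
  refine (hss S hnz hprop).lt_of_ne fun heq => hslope ?_
  have hzdot : zdot ζ (v0, v1, 1) = 0 := by simpa [zdot] using hstar.1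
  have hrk : srank (v0, v1, 1) = v0 + v1 + 1 := by simp [srank]
  rw [S.mu_eq, X.mu_top ζ n hF, hV0, hV1, hVinf, hzdot, zero_add, hrk,
    div_eq_div_iff (zero_lt_one.trans_le (one_le_srank hnz.dimVec_pos.ne')).ne'
      (by positivity)] at heq
  linear_combination heq

/-- Under condition (★), `(ζ,n)`-semistability implies `(ζ,n)`-stability. -/
theorem pairSemistable_implies_pairStable
    (r m v0 v1 ℓ : ℕ) (hr : 1 ≤ r) (hv0 : 1 ≤ v0) (hv1 : 1 ≤ v1)
    (hℓ : ℓ ∈ Finset.Icc 1 v1)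
    (z0 ζ : ℚ × ℚ × ℚ) (n : ℕ → ℚ)
    (hz0 : z0.1 < 0)
    (hwall : (m : ℚ) * z0.1 + ((m : ℚ) + 1) * z0.2.1 = 0)
    (hnorm : z0.1 * (v0 : ℚ) + z0.2.1 * (v1 : ℚ) + z0.2.2 = 0)
    (hn : ∀ k ∈ Finset.Icc 1 v1, 0 < n k)
    (hstar : SatisfiesStar m v0 v1 ℓ z0 ζ n)
    {V0 V1 Vinf : Type*} [AddCommGroup V0] [Module ℂ V0] [FiniteDimensional ℂ V0]
    [AddCommGroup V1] [Module ℂ V1] [FiniteDimensional ℂ V1]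
    [AddCommGroup Vinf] [Module ℂ Vinf] [FiniteDimensional ℂ Vinf]
    (X : ADHMData r V0 V1 Vinf)
    (hV0 : finrank ℂ V0 = v0) (hV1 : finrank ℂ V1 = v1) (hVinf : finrank ℂ Vinf = 1)
    (F : ℕ → Submodule ℂ V1) (hF : IsFullFlag v1 F)
    (hss : PairSemistable X ζ n v1 F) :
    PairStable X ζ n v1 F :=
  pairSemistable_implies_pairStable_general r m v0 v1 ℓ hℓ z0 ζ n hz0 hwall hnorm hn hstar X hV0 hV1
    hVinf F hF hss
end

section
/- For every integer m ≥ 0, all integers v_0 ≥ 1 and v_1 ≥ 1, every ℓ ∈ {1, …, N} with N = v_1, and every ζ⁰ = (ζ⁰_0, ζ⁰_1, ζ⁰_∞) ∈ ℚ³ with ζ⁰_0 < 0, m·ζ⁰_0 + (m+1)·ζ⁰_1 = 0 and ζ⁰_0·v_0 + ζ⁰_1·v_1 + ζ⁰_∞ = 0, there exist ζ ∈ ℚ³ and n = (n_1, …, n_N) with all n_k ∈ ℚ_{>0} such that the pair (ζ, n) satisfies condition (★). -/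
set_option maxHeartbeats 1600000
/-- Parameters `(ζ, n)` satisfying condition (★) always exist. -/
theorem exists_star_parameters
    (m v0 v1 ℓ : ℕ) (hv0 : 1 ≤ v0) (hv1 : 1 ≤ v1)
    (hℓ : ℓ ∈ Finset.Icc 1 v1)
    (z0 : ℚ × ℚ × ℚ)
    (hz0 : z0.1 < 0)
    (hwall : (m : ℚ) * z0.1 + ((m : ℚ) + 1) * z0.2.1 = 0)
    (hnorm : z0.1 * (v0 : ℚ) + z0.2.1 * (v1 : ℚ) + z0.2.2 = 0) :
    ∃ (ζ : ℚ × ℚ × ℚ) (n : ℕ → ℚ),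
      (∀ k ∈ Finset.Icc 1 v1, 0 < n k) ∧ SatisfiesStar m v0 v1 ℓ z0 ζ n := by

  obtain ⟨hℓ1, hℓN⟩ := Finset.mem_Icc.mp hℓ
  have hv0Q : (1:ℚ) ≤ (v0:ℚ) := by exact_mod_cast hv0
  have hv1Q : (1:ℚ) ≤ (v1:ℚ) := by exact_mod_cast hv1
  set R : ℚ := (v0:ℚ) + (v1:ℚ) + 1 with hR
  have hR3 : (3:ℚ) ≤ R := by rw [hR]; linarith
  have hRpos : (0:ℚ) < R := by linarith
  have hRne : R ≠ 0 := ne_of_gt hRpos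
  set C : ℚ := 2 * (v1:ℚ) * R + 1 with hCdef
  have hC1 : (1:ℚ) < C := by rw [hCdef]; nlinarith
  have hCpos : (0:ℚ) < C := by linarith
  have hCne : C ≠ 0 := ne_of_gt hCpos
  have hpow_pos : ∀ j:ℕ, (0:ℚ) < C^j := fun j => pow_pos hCpos j
  -- D is nonempty
  have hmem : ((1,0,0) : ℕ×ℕ×ℕ) ∈ Dset v0 v1 z0 := by
    unfold Dset
    rw [Finset.mem_filter]
    refine ⟨?_, ?_, ?_⟩
    · simp [Finset.mem_product, hv0]
    · simp
    · simpa [zdot] using ne_of_lt hz0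
  have hDne : (Dset v0 v1 z0).Nonempty := ⟨_, hmem⟩
  have hsrank_pos : ∀ s ∈ Dset v0 v1 z0, 0 < srank s := by
    intro s hs
    unfold Dset at hs
    rw [Finset.mem_filter] at hs
    obtain ⟨-, hne, -⟩ := hs
    obtain ⟨a, b, c⟩ := s
    have h1 : 0 < a + b + c := by
      by_contra h
      push_neg at h
      have ha : a = 0 := by omega
      have hb : b = 0 := by omega
      have hc : c = 0 := by omega
      subst ha; subst hb; subst hc
      exact hne rfl
    have h2 : (0:ℚ) < (a:ℚ) + (b:ℚ) + (c:ℚ) := by exact_mod_cast h1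
    simpa [srank] using h2
  obtain ⟨ε, hεpos, hμbound⟩ : ∃ ε : ℚ, 0 < ε ∧
      ∀ s' ∈ Dset v0 v1 z0, 2 * ((v1:ℚ) + 1) * ε ≤ |zdot z0 s'| / srank s' := by
    have hden : (0:ℚ) < 2 * ((v1:ℚ) + 1) := by linarith
    refine ⟨((Dset v0 v1 z0).inf' hDne (fun s => |zdot z0 s| / srank s))
        / (2 * ((v1:ℚ) + 1)), ?_, ?_⟩
    · apply div_pos ?_ hden
      rw [Finset.lt_inf'_iff]
      intro s hs
      have h2 : zdot z0 s ≠ 0 := by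
        unfold Dset at hs; rw [Finset.mem_filter] at hs; exact hs.2.2
      exact div_pos (abs_pos.mpr h2) (hsrank_pos s hs)
    · intro s' hs'
      have h := Finset.inf'_le (fun s => |zdot z0 s| / srank s) hs'
      have he : 2 * ((v1:ℚ) + 1) *
          (((Dset v0 v1 z0).inf' hDne (fun s => |zdot z0 s| / srank s))
            / (2 * ((v1:ℚ) + 1)))
          = (Dset v0 v1 z0).inf' hDne (fun s => |zdot z0 s| / srank s) := by
        field_simp
      rw [he]
      exact h
  clear hmem hDne
  set n : ℕ → ℚ := fun k => ε * (C - 1) / ((k:ℚ) * C ^ (k+1)) with hn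
  have hnpos : ∀ k : ℕ, 1 ≤ k → 0 < n k := by
    intro k hk
    have hk' : (0:ℚ) < (k:ℚ) := by exact_mod_cast hk
    have hC0 : (0:ℚ) < C - 1 := by linarith
    rw [hn]
    exact div_pos (mul_pos hεpos hC0) (mul_pos hk' (pow_pos hCpos _))
  have hterm : ∀ i : ℕ, 1 ≤ i → (i:ℚ) * n i = ε * (C-1) / C^(i+1) := by
    intro i hi
    have hi' : (i:ℚ) ≠ 0 := by
      have : (0:ℚ) < (i:ℚ) := by exact_mod_cast hi
      exact ne_of_gt this
    have hp : C^(i+1) ≠ 0 := pow_ne_zero _ hCne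
    rw [hn]
    field_simp
  have hT : ∀ b : ℕ, ∑ i ∈ Finset.Icc 1 b, (i:ℚ) * n i = ε / C - ε / C^(b+1) := by
    intro b
    induction b with
    | zero =>
      rw [Finset.Icc_eq_empty (by omega), Finset.sum_empty, pow_one]
      ring
    | succ b ih =>
      rw [Finset.sum_Icc_succ_top (by omega), ih, hterm (b+1) (by omega)]
      have hp1 : C^(b+1) ≠ 0 := pow_ne_zero _ hCne
      have hp2 : C^(b+2) ≠ 0 := pow_ne_zero _ hCne
      field_simp
      ring
  have hsplit : ∀ k : ℕ, k ≤ v1 →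
      ∑ i ∈ Finset.Icc (k+1) v1, (i:ℚ) * n i = ε / C^(k+1) - ε / C^(v1+1) := by
    intro k hk
    have e1 : Finset.Icc (k+1) v1 = Finset.Ioc k v1 := Finset.Icc_add_one_left_eq_Ioc k v1
    have e2 : ∀ b:ℕ, Finset.Icc 1 b = Finset.Ioc 0 b := fun b => Finset.Icc_add_one_left_eq_Ioc 0 b
    have h := Finset.sum_Ioc_consecutive (fun i : ℕ => (i:ℚ) * n i) (Nat.zero_le k) hk
    have hTk := hT k
    have hTv := hT v1
    rw [e2] at hTk hTv
    rw [e1]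
    linarith [h, hTk, hTv]
  have hnk_ge : ∀ k:ℕ, 1 ≤ k → k ≤ v1 → 2*R*(ε / C^(k+1)) ≤ n k := by
    intro k h1 h2
    have hk0 : (0:ℚ) < (k:ℚ) := by exact_mod_cast h1
    have hkv : (k:ℚ) ≤ (v1:ℚ) := by exact_mod_cast h2
    rw [hn, ← mul_div_assoc,
      div_le_div_iff₀ (hpow_pos (k+1)) (mul_pos hk0 (hpow_pos (k+1)))]
    have hCm1 : C - 1 = 2 * (v1:ℚ) * R := by rw [hCdef]; ring
    rw [hCm1]
    have hfac : (0:ℚ) ≤ 2*R*ε*C^(k+1) := by positivity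
    nlinarith [mul_le_mul_of_nonneg_left hkv hfac]
  have hnℓpos : 0 < n ℓ := hnpos ℓ hℓ1
  have hAlow : n ℓ ≤ ε / C - ε / C^(ℓ+1) := by
    have h1 : (ℓ:ℚ) * n ℓ ≤ ∑ i ∈ Finset.Icc 1 ℓ, (i:ℚ) * n i := by
      apply Finset.single_le_sum (f := fun i : ℕ => (i:ℚ) * n i)
      · intro i hi
        have hi1 : 1 ≤ i := (Finset.mem_Icc.mp hi).1
        have : (0:ℚ) < (i:ℚ) := by exact_mod_cast hi1
        exact le_of_lt (mul_pos this (hnpos i hi1))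
      · exact Finset.mem_Icc.mpr ⟨hℓ1, le_refl ℓ⟩
    have h2 : (1:ℚ) ≤ (ℓ:ℚ) := by exact_mod_cast hℓ1
    have h3 := hT ℓ
    nlinarith [mul_nonneg (by linarith : (0:ℚ) ≤ (ℓ:ℚ) - 1) (le_of_lt hnℓpos)]
  set c : ℚ := (ε / C - ε / C^(ℓ+1)) - n ℓ / 2 with hcdef
  have hcpos : 0 < c := by rw [hcdef]; linarith
  have hclt : c < ε := by
    have h1 : ε / C < ε := div_lt_self hεpos hC1
    have h2 : (0:ℚ) < ε / C^(ℓ+1) := div_pos hεpos (hpow_pos _)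
    rw [hcdef]; linarith
  have hm0 : (0:ℚ) ≤ (m:ℚ) := Nat.cast_nonneg m
  have hden_pos : (0:ℚ) < R * ((m:ℚ)+1) := mul_pos hRpos (by linarith)
  set η : ℚ := c * (2*(m:ℚ)+1) / (R * ((m:ℚ)+1)) with hηdef
  have hηpos : 0 < η := by
    rw [hηdef]
    exact div_pos (mul_pos hcpos (by linarith)) hden_pos
  have hηlt : η < ε := by
    rw [hηdef, div_lt_iff₀ hden_pos]
    have hstep1 : c * (2*(m:ℚ)+1) < ε * (2*(m:ℚ)+1) :=
      mul_lt_mul_of_pos_right hclt (by linarith)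
    have hstep2 : (2*(m:ℚ)+1) ≤ R*((m:ℚ)+1) := by
      linarith [mul_nonneg (by linarith : (0:ℚ) ≤ R-3) (by linarith : (0:ℚ) ≤ (m:ℚ)+1)]
    have hstep3 : ε * (2*(m:ℚ)+1) ≤ ε * (R*((m:ℚ)+1)) :=
      mul_le_mul_of_nonneg_left hstep2 (le_of_lt hεpos)
    linarith
  have hoff : R / (2*(m:ℚ)+1) * ((m:ℚ) * z0.1 + ((m:ℚ)+1) * (z0.2.1 + η)) = c := by
    have h1 : (m:ℚ) * z0.1 + ((m:ℚ)+1) * (z0.2.1 + η) = ((m:ℚ)+1) * η := by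
      linear_combination hwall
    have h2m : (2*(m:ℚ)+1) ≠ 0 := by positivity
    have hm1 : ((m:ℚ)+1) ≠ 0 := by positivity
    rw [h1, hηdef]
    field_simp
  clear_value η c n C R
  refine ⟨(z0.1, z0.2.1 + η, z0.2.2 - (v1:ℚ) * η), n, ?_, ?_⟩
  · intro k hk
    exact hnpos k (Finset.mem_Icc.mp hk).1
  unfold SatisfiesStar
  simp only [← hR]

  refine ⟨?_, ?_, ?_, ?_, ?_⟩
  · -- (a)
    linear_combination hnorm
  · -- (b)
    intro k hk
    rw [Finset.mem_Icc] at hk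
    obtain ⟨hk1, hk2⟩ := hk
    have hkv : k + 1 ≤ v1 := by omega
    rw [hsplit k (by omega)]
    have hlt : C^(k+1) < C^(v1+1) := pow_lt_pow_right₀ hC1 (by omega)
    have h1 : ε / C^(v1+1) < ε / C^(k+1) :=
      div_lt_div_of_pos_left hεpos (hpow_pos _) hlt
    constructor
    · linarith [hnk_ge k hk1 (by omega),
        mul_pos hRpos (div_pos hεpos (hpow_pos (v1+1))),
        mul_pos hRpos (div_pos hεpos (hpow_pos (k+1)))]
    · exact mul_pos hRpos (by linarith)
  · -- (c)
    intro s hs s' hs'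
    have hr := hsrank_pos s hs
    have hμle := hμbound s' hs'
    clear hs hs'
    have hdiffeq : zdot z0 s - zdot (z0.1, z0.2.1 + η, z0.2.2 - (v1:ℚ) * η) s
        = η * ((v1:ℚ) * (s.2.2:ℚ) - (s.2.1:ℚ)) := by
      unfold zdot
      dsimp only
      ring
    have habs : |(v1:ℚ) * (s.2.2:ℚ) - (s.2.1:ℚ)| ≤ (v1:ℚ) * srank s := by
      have h0 : (0:ℚ) ≤ (s.1:ℚ) := Nat.cast_nonneg _
      have h1 : (0:ℚ) ≤ (s.2.1:ℚ) := Nat.cast_nonneg _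
      have h2 : (0:ℚ) ≤ (s.2.2:ℚ) := Nat.cast_nonneg _
      have h3 : (0:ℚ) ≤ ((v1:ℚ)-1) * (s.2.1:ℚ) := mul_nonneg (by linarith) h1
      unfold srank
      rw [abs_le]
      constructor <;>
        linarith [h1, h3, mul_nonneg (by linarith : (0:ℚ) ≤ (v1:ℚ)) h0,
          mul_nonneg (by linarith : (0:ℚ) ≤ (v1:ℚ)) h2]
    have hstep : |zdot z0 s - zdot (z0.1, z0.2.1 + η, z0.2.2 - (v1:ℚ) * η) s| / srank s
        ≤ η * (v1:ℚ) := by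
      rw [hdiffeq, abs_mul, abs_of_pos hηpos, div_le_iff₀ hr]
      calc η * |(v1:ℚ) * (s.2.2:ℚ) - (s.2.1:ℚ)|
          ≤ η * ((v1:ℚ) * srank s) := mul_le_mul_of_nonneg_left habs (le_of_lt hηpos)
        _ = η * (v1:ℚ) * srank s := by ring
    rw [hT v1]
    have hEC : ε / C < ε := div_lt_self hεpos hC1
    have hE2 : 0 < ε / C^(v1+1) := div_pos hεpos (hpow_pos _)
    have hηv : η * (v1:ℚ) < ε * (v1:ℚ) :=
      mul_lt_mul_of_pos_right hηlt (by linarith)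
    linarith [hstep, hμle,
      mul_nonneg (le_of_lt hεpos) (by linarith : (0:ℚ) ≤ (v1:ℚ))]
  · -- (d)
    rw [hT ℓ, hoff]
    have heq : ε / C - ε / C^(ℓ+1) - c = n ℓ / 2 := by rw [hcdef]; ring
    rw [heq]
    constructor <;> linarith
  · -- (e)
    rw [hT ℓ, hoff, hsplit ℓ hℓN]
    have heq1 : ε / C - ε / C^(ℓ+1) - c = n ℓ / 2 := by rw [hcdef]; ring
    have heq2 : n ℓ - (ε / C - ε / C^(ℓ+1)) + c = n ℓ / 2 := by rw [hcdef]; ring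
    rw [heq1, heq2, min_self]
    linarith [hnk_ge ℓ hℓ1 hℓN,
      mul_pos hRpos (div_pos hεpos (hpow_pos (v1+1)))]
end

section
/- Assume the pair (ζ, n) satisfies condition (★) with respect to (m, v_0, v_1, ℓ, ζ⁰). Let X be an ADHM representation with dim V_∞ = 1, dim V_0 = v_0 and dim V_1 = v_1, and let F• be a full flag of V_1 of length N = v_1. Let S be a nonzero submodule of X with S_∞ = 0 and m·dim S_1 = (m+1)·dim S_0. Then μ_{ζ,n}(S) ≠ μ_{ζ,n}(X), and μ_{ζ,n}(S) < μ_{ζ,n}(X) holds if and only if S_1 ∩ F^ℓ = 0. -/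
open Module


/-!
Write `s = dim S₀ + dim S₁`, `rk = v₀ + v₁ + 1`, `c = (m ζ₀ + (m + 1) ζ₁) / (2m + 1)` and
`Φ = ∑ₖ nₖ dim (S₁ ∩ Fᵏ)`. On the wall `m dim S₁ = (m + 1) dim S₀` the `ζ`-degree of `S` is
`s c`, and by (a) that of `X` vanishes, so `μ(S) = c + Φ / s` and `μ(X) = c + (A + R) / rk`,
where `A` is the quantity in (d) and `R = ∑_{k > ℓ} k nₖ`. If `S₁ ∩ F^ℓ = 0`, only the terms
with `k > ℓ` contribute to `Φ`, so `Φ / s ≤ R < A / rk` by (e), and `μ(S) < μ(X)`. Otherwise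
`Φ ≥ n_ℓ > A + R` by (e), and `s < rk` gives `μ(X) < μ(S)`.
-/

open Finset

lemma Finset.sum_Icc_consecutive {M : Type*} [AddCommMonoid M] (f : ℕ → M) {a ℓ N : ℕ}
    (haℓ : a ≤ ℓ + 1) (hℓN : ℓ ≤ N) :
    ∑ k ∈ Icc a N, f k = ∑ k ∈ Icc a ℓ, f k + ∑ k ∈ Icc (ℓ + 1) N, f k := by
  simp only [← Finset.Ico_add_one_right_eq_Icc]
  exact (Finset.sum_Ico_consecutive f haℓ (by omega)).symm

section Flags

variable {V1 : Type*} [AddCommGroup V1] [Module ℂ V1] {N ℓ : ℕ} {n : ℕ → ℚ}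
  {F : ℕ → Submodule ℂ V1} {W : Submodule ℂ V1}

noncomputable def flagWeight (n : ℕ → ℚ) (N : ℕ) (F : ℕ → Submodule ℂ V1)
    (W : Submodule ℂ V1) : ℚ :=
  ∑ k ∈ Icc 1 N, n k * (finrank ℂ ↥(W ⊓ F k) : ℚ)

lemma le_flagWeight_of_inf_ne_bot [FiniteDimensional ℂ V1] (hn : ∀ k ∈ Icc 1 N, 0 ≤ n k)
    (hℓ : ℓ ∈ Icc 1 N) (h : W ⊓ F ℓ ≠ ⊥) : n ℓ ≤ flagWeight n N F W := by
  have hpos : (1 : ℚ) ≤ finrank ℂ ↥(W ⊓ F ℓ) := by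
    exact_mod_cast Nat.one_le_iff_ne_zero.mpr (mt Submodule.finrank_eq_zero.mp h)
  calc n ℓ ≤ n ℓ * finrank ℂ ↥(W ⊓ F ℓ) := le_mul_of_one_le_right (hn ℓ hℓ) hpos
    _ ≤ flagWeight n N F W :=
      single_le_sum (f := fun k => n k * (finrank ℂ ↥(W ⊓ F k) : ℚ))
        (fun k hk => mul_nonneg (hn k hk) (Nat.cast_nonneg _)) hℓ

namespace IsFullFlag

lemma finrank_eq (hF : IsFullFlag N F) : finrank ℂ V1 = N := by
  rw [← finrank_top, ← hF.top, hF.dim N le_rfl]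

lemma monotoneOn (hF : IsFullFlag N F) : MonotoneOn F (Set.Iic N) :=
  monotoneOn_of_le_add_one Set.ordConnected_Iic fun k _ _ hk => hF.mono k hk

lemma flagWeight_top (hF : IsFullFlag N F) (n : ℕ → ℚ) :
    flagWeight n N F ⊤ = ∑ k ∈ Icc 1 N, (k : ℚ) * n k :=
  sum_congr rfl fun k hk => by rw [top_inf_eq, hF.dim k (mem_Icc.mp hk).2, mul_comm]

lemma flagWeight_le_of_inf_eq_bot [FiniteDimensional ℂ V1] (hF : IsFullFlag N F)
    (hn : ∀ k ∈ Icc 1 N, 0 ≤ n k) (hℓN : ℓ ≤ N) (h : W ⊓ F ℓ = ⊥) :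
    flagWeight n N F W ≤ ∑ k ∈ Icc (ℓ + 1) N, (k : ℚ) * n k := by
  have hlow : ∀ k ∈ Icc 1 ℓ, n k * (finrank ℂ ↥(W ⊓ F k) : ℚ) = 0 := fun k hk => by
    have hkℓ : F k ≤ F ℓ := hF.monotoneOn (Set.mem_Iic.mpr (by grind))
      (Set.mem_Iic.mpr hℓN) (mem_Icc.mp hk).2
    have hbot : W ⊓ F k = ⊥ := eq_bot_iff.mpr (h ▸ inf_le_inf_left W hkℓ)
    rw [hbot, finrank_bot, Nat.cast_zero, mul_zero]
  rw [flagWeight, sum_Icc_consecutive _ (by omega) hℓN, sum_eq_zero hlow, zero_add]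
  refine sum_le_sum fun k hk => ?_
  have hkN := (mem_Icc.mp hk).2
  have hdim : (finrank ℂ ↥(W ⊓ F k) : ℚ) ≤ k := by
    exact_mod_cast (Submodule.finrank_mono inf_le_right).trans (hF.dim k hkN).le
  rw [mul_comm (k : ℚ)]
  exact mul_le_mul_of_nonneg_left hdim (hn k (mem_Icc.mpr ⟨by grind, hkN⟩))

end IsFullFlag

end Flags

lemma zdot_eq_of_wall {m s0 s1 : ℚ} (ζ0 ζ1 : ℚ) (hm : 0 ≤ m) (hwall : m * s1 = (m + 1) * s0) :
    ζ0 * s0 + ζ1 * s1 = (s0 + s1) * ((m * ζ0 + (m + 1) * ζ1) / (2 * m + 1)) := by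
  field_simp
  linear_combination (ζ1 - ζ0) * hwall

section Slopes

variable {r : ℕ} {V0 V1 Vinf : Type*} [AddCommGroup V0] [Module ℂ V0] [AddCommGroup V1]
  [Module ℂ V1] [AddCommGroup Vinf] [Module ℂ Vinf] {X : ADHMData r V0 V1 Vinf}
  {ζ : ℚ × ℚ × ℚ} {n : ℕ → ℚ} {N : ℕ} {F : ℕ → Submodule ℂ V1}

lemma ADHMData.mu_top_eq (X : ADHMData r V0 V1 Vinf) (hF : IsFullFlag N F)
    (hVinf : finrank ℂ Vinf = 1) (hζ : ζ.1 * finrank ℂ V0 + ζ.2.1 * N + ζ.2.2 = 0) :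
    X.top.mu ζ n N F = (∑ k ∈ Icc 1 N, (k : ℚ) * n k) / (finrank ℂ V0 + N + 1) := by
  have h0 : finrank ℂ X.top.S0 = finrank ℂ V0 := finrank_top ℂ V0
  have h1 : finrank ℂ X.top.S1 = N := (finrank_top ℂ V1).trans hF.finrank_eq
  have hinf : finrank ℂ X.top.Sinf = 1 := (finrank_top ℂ Vinf).trans hVinf
  rw [ADHMSub.mu, ADHMSub.zdeg, ADHMSub.rank, h0, h1, hinf, Nat.cast_one, mul_one, hζ, zero_add]
  exact congrArg (· / _) (hF.flagWeight_top n)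

namespace ADHMSub

lemma mu_eq_add_div_of_wall {m : ℕ} (S : ADHMSub X) (hSinf : S.Sinf = ⊥)
    (hwall : (m : ℚ) * finrank ℂ S.S1 = (m + 1) * finrank ℂ S.S0)
    (hs : (finrank ℂ S.S0 + finrank ℂ S.S1 : ℚ) ≠ 0) :
    S.mu ζ n N F = (m * ζ.1 + (m + 1) * ζ.2.1) / (2 * m + 1)
      + flagWeight n N F S.S1 / (finrank ℂ S.S0 + finrank ℂ S.S1) := by
  have hinf : finrank ℂ S.Sinf = 0 := by rw [hSinf]; exact finrank_bot ℂ Vinf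
  rw [mu, zdeg, rank, hinf, Nat.cast_zero, mul_zero, add_zero, add_zero,
    zdot_eq_of_wall _ _ m.cast_nonneg hwall, add_div, mul_div_cancel_left₀ _ hs]
  rfl

lemma finrank_S1_pos_of_wall [FiniteDimensional ℂ V0] [FiniteDimensional ℂ V1] {m : ℕ}
    (S : ADHMSub X) (hS : S.IsNonzero) (hSinf : S.Sinf = ⊥)
    (hwall : (m : ℤ) * finrank ℂ S.S1 = ((m : ℤ) + 1) * finrank ℂ S.S0) :
    0 < finrank ℂ S.S1 := by
  by_contra! h0
  have hS1 : finrank ℂ S.S1 = 0 := by omega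
  have hS0 : finrank ℂ S.S0 = 0 := by
    rw [hS1] at hwall
    exact_mod_cast (mul_eq_zero.mp hwall.symm).resolve_left (by omega)
  rcases hS with h | h | h
  · exact h (Submodule.finrank_eq_zero.mp hS0)
  · exact h (Submodule.finrank_eq_zero.mp hS1)
  · exact h hSinf

end ADHMSub

end Slopes

section SlopeInequalities

variable {K : Type*} [Field K] [LinearOrder K] [IsStrictOrderedRing K] {A R Φ a s rk : K}

lemma div_lt_add_div_of_le_of_mul_lt (hΦ : Φ ≤ R) (hs : 1 ≤ s) (hR : 0 ≤ R) (hrk : 0 < rk)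
    (hRA : rk * R < A) : Φ / s < (A + R) / rk := by
  calc Φ / s ≤ R / s := div_le_div_of_nonneg_right hΦ (by linarith)
    _ ≤ R := div_le_self hR hs
    _ < A / rk := by rwa [lt_div_iff₀ hrk, mul_comm]
    _ ≤ (A + R) / rk := div_le_div_of_nonneg_right (by linarith) hrk.le

lemma add_div_lt_div_of_le_of_mul_lt (ha : a ≤ Φ) (hs : 0 < s) (hsrk : s ≤ rk) (hR : 0 ≤ R)
    (hrk : 1 ≤ rk) (hRA : rk * R < A) (hRa : rk * R < a - A) : (A + R) / rk < Φ / s := by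
  have hAR : 0 ≤ A + R := by nlinarith
  calc (A + R) / rk ≤ (A + R) / s := div_le_div_of_nonneg_left hAR hs hsrk
    _ < a / s := by
      refine div_lt_div_of_pos_right ?_ hs
      nlinarith
    _ ≤ Φ / s := div_le_div_of_nonneg_right ha hs.le

end SlopeInequalities

theorem mu_lt_iff_inf_flag_trivial_general
    (r m v0 v1 ℓ : ℕ)
    (hℓ : ℓ ∈ Finset.Icc 1 v1)
    (z0 ζ : ℚ × ℚ × ℚ) (n : ℕ → ℚ)
    (hn : ∀ k ∈ Finset.Icc 1 v1, 0 < n k)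
    (hstar : SatisfiesStar m v0 v1 ℓ z0 ζ n)
    {V0 V1 Vinf : Type*} [AddCommGroup V0] [Module ℂ V0] [FiniteDimensional ℂ V0]
    [AddCommGroup V1] [Module ℂ V1] [FiniteDimensional ℂ V1]
    [AddCommGroup Vinf] [Module ℂ Vinf]
    (X : ADHMData r V0 V1 Vinf)
    (hV0 : finrank ℂ V0 = v0) (hVinf : finrank ℂ Vinf = 1)
    (F : ℕ → Submodule ℂ V1) (hF : IsFullFlag v1 F)
    (S : ADHMSub X) (hSnz : S.IsNonzero) (hSinf : S.Sinf = ⊥)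
    (hSwall : (m : ℤ) * (finrank ℂ S.S1 : ℤ) = ((m : ℤ) + 1) * (finrank ℂ S.S0 : ℤ)) :
    S.mu ζ n v1 F ≠ X.top.mu ζ n v1 F ∧
    (S.mu ζ n v1 F < X.top.mu ζ n v1 F ↔ S.S1 ⊓ F ℓ = ⊥) := by
  obtain ⟨hζ, -, -, -, hE⟩ := hstar
  have hℓv := (mem_Icc.mp hℓ).2
  have hn₀ : ∀ k ∈ Icc 1 v1, 0 ≤ n k := fun k hk => (hn k hk).le
  set rk : ℚ := v0 + v1 + 1
  set c : ℚ := (m * ζ.1 + (m + 1) * ζ.2.1) / (2 * m + 1)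
  set R : ℚ := ∑ i ∈ Icc (ℓ + 1) v1, (i : ℚ) * n i
  set A : ℚ := ∑ i ∈ Icc 1 ℓ, (i : ℚ) * n i - rk / (2 * m + 1) * (m * ζ.1 + (m + 1) * ζ.2.1)
  have hRA : rk * R < A := hE.trans_le (min_le_left _ _)
  have hRn : rk * R < n ℓ - A := (hE.trans_le (min_le_right _ _)).trans_eq (by ring)
  have hμX : X.top.mu ζ n v1 F = c + (A + R) / rk := by
    rw [X.mu_top_eq hF hVinf (hV0 ▸ hζ), hV0, sum_Icc_consecutive _ (by omega) hℓv]
    simp only [c, A, R, rk]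
    field_simp
    ring
  set s : ℚ := finrank ℂ S.S0 + finrank ℂ S.S1
  have hs : 1 ≤ s := by
    have h1 : (1 : ℚ) ≤ finrank ℂ S.S1 := by
      exact_mod_cast S.finrank_S1_pos_of_wall hSnz hSinf hSwall
    linarith [(finrank ℂ S.S0).cast_nonneg (α := ℚ)]
  have hsrk : s ≤ rk := by
    have h0 : (finrank ℂ S.S0 : ℚ) ≤ v0 := by exact_mod_cast hV0 ▸ Submodule.finrank_le S.S0
    have h1 : (finrank ℂ S.S1 : ℚ) ≤ v1 := by
      exact_mod_cast hF.finrank_eq ▸ Submodule.finrank_le S.S1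
    linarith
  have hμS : S.mu ζ n v1 F = c + flagWeight n v1 F S.S1 / s :=
    S.mu_eq_add_div_of_wall hSinf (by exact_mod_cast hSwall) (by linarith)
  have hR : 0 ≤ R := sum_nonneg fun i hi => mul_nonneg i.cast_nonneg (hn₀ i (by grind))
  by_cases h : S.S1 ⊓ F ℓ = ⊥
  · have hlt : S.mu ζ n v1 F < X.top.mu ζ n v1 F := by
      rw [hμS, hμX]
      exact (add_lt_add_iff_left c).mpr (div_lt_add_div_of_le_of_mul_lt
        (hF.flagWeight_le_of_inf_eq_bot hn₀ hℓv h) hs hR (by positivity) hRA)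
    exact ⟨hlt.ne, iff_of_true hlt h⟩
  · have hgt : X.top.mu ζ n v1 F < S.mu ζ n v1 F := by
      rw [hμS, hμX]
      exact (add_lt_add_iff_left c).mpr (add_div_lt_div_of_le_of_mul_lt
        (le_flagWeight_of_inf_ne_bot hn₀ hℓ h) (by linarith) hsrk hR (by linarith) hRA hRn)
    exact ⟨hgt.ne', iff_of_false hgt.not_gt h⟩

/-- Under condition (★): for a nonzero submodule `S` with `S∞ = 0` lying on the wall
`m·dim S₁ = (m+1)·dim S₀`, the slope of `S` never equals that of `X`, and it is smaller
iff `S₁ ∩ F^ℓ = 0`. -/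
theorem mu_lt_iff_inf_flag_trivial
    (r m v0 v1 ℓ : ℕ) (hr : 1 ≤ r) (hv0 : 1 ≤ v0) (hv1 : 1 ≤ v1)
    (hℓ : ℓ ∈ Finset.Icc 1 v1)
    (z0 ζ : ℚ × ℚ × ℚ) (n : ℕ → ℚ)
    (hz0 : z0.1 < 0)
    (hwall : (m : ℚ) * z0.1 + ((m : ℚ) + 1) * z0.2.1 = 0)
    (hnorm : z0.1 * (v0 : ℚ) + z0.2.1 * (v1 : ℚ) + z0.2.2 = 0)
    (hn : ∀ k ∈ Finset.Icc 1 v1, 0 < n k)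
    (hstar : SatisfiesStar m v0 v1 ℓ z0 ζ n)
    {V0 V1 Vinf : Type*} [AddCommGroup V0] [Module ℂ V0] [FiniteDimensional ℂ V0]
    [AddCommGroup V1] [Module ℂ V1] [FiniteDimensional ℂ V1]
    [AddCommGroup Vinf] [Module ℂ Vinf] [FiniteDimensional ℂ Vinf]
    (X : ADHMData r V0 V1 Vinf)
    (hV0 : finrank ℂ V0 = v0) (hV1 : finrank ℂ V1 = v1) (hVinf : finrank ℂ Vinf = 1)
    (F : ℕ → Submodule ℂ V1) (hF : IsFullFlag v1 F)
    (S : ADHMSub X) (hSnz : S.IsNonzero) (hSinf : S.Sinf = ⊥)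
    (hSwall : (m : ℤ) * (finrank ℂ S.S1 : ℤ) = ((m : ℤ) + 1) * (finrank ℂ S.S0 : ℤ)) :
    S.mu ζ n v1 F ≠ X.top.mu ζ n v1 F ∧
    (S.mu ζ n v1 F < X.top.mu ζ n v1 F ↔ S.S1 ⊓ F ℓ = ⊥) :=
  mu_lt_iff_inf_flag_trivial_general r m v0 v1 ℓ hℓ z0 ζ n hn hstar X hV0 hVinf F hF S hSnz hSinf
    hSwall
end

section
/- Let X = (B_1, B_2, d, i, j) be an ADHM datum on (V_0, V_1, W) satisfying the ADHM relation, and assume X is (m,m+1)-semistable. Then the linear map dμ : Hom(V_0, V_1) ⊕ Hom(V_1, V_0) ⊕ Hom(V_1, V_0) ⊕ Hom(W, V_0) ⊕ Hom(V_1, W) → Hom(V_1, V_0) defined by dμ(d̃, B̃_1, B̃_2, ĩ, j̃) = B_1∘d∘B̃_2 + B_1∘d̃∘B_2 + B̃_1∘d∘B_2 − B_2∘d∘B̃_1 − B_2∘d̃∘B_1 − B̃_2∘d∘B_1 + ĩ∘j + i∘j̃ is surjective. -/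
open Module

/-- An ADHM datum on `(V0, V1, W)`: maps `B1 B2 : V1 → V0`, `d : V0 → V1`, `i : W → V0`,
`j : V1 → W` satisfying the ADHM relation `B1∘d∘B2 − B2∘d∘B1 + i∘j = 0`. -/
structure ADHMW (V0 V1 W : Type*)
    [AddCommGroup V0] [Module ℂ V0] [AddCommGroup V1] [Module ℂ V1]
    [AddCommGroup W] [Module ℂ W] where
  B1 : V1 →ₗ[ℂ] V0
  B2 : V1 →ₗ[ℂ] V0
  d : V0 →ₗ[ℂ] V1
  i : W →ₗ[ℂ] V0
  j : V1 →ₗ[ℂ] W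
  rel : B1 ∘ₗ d ∘ₗ B2 - B2 ∘ₗ d ∘ₗ B1 + i ∘ₗ j = 0

/-- `(m, m+1)`-semistability of an ADHM datum. -/
def MMSemistable (m : ℕ) {V0 V1 W : Type*}
    [AddCommGroup V0] [Module ℂ V0] [AddCommGroup V1] [Module ℂ V1]
    [AddCommGroup W] [Module ℂ W] (X : ADHMW V0 V1 W) : Prop :=
  (∀ (S0 : Submodule ℂ V0) (S1 : Submodule ℂ V1),
      (∀ x ∈ S1, X.B1 x ∈ S0) → (∀ x ∈ S1, X.B2 x ∈ S0) →
      (∀ x ∈ S0, X.d x ∈ S1) → (∀ x ∈ S1, X.j x = 0) →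
      (m : ℤ) * (finrank ℂ S1 : ℤ) ≤ ((m : ℤ) + 1) * (finrank ℂ S0 : ℤ)) ∧
  (∀ (T0 : Submodule ℂ V0) (T1 : Submodule ℂ V1),
      (∀ x ∈ T1, X.B1 x ∈ T0) → (∀ x ∈ T1, X.B2 x ∈ T0) →
      (∀ x ∈ T0, X.d x ∈ T1) → (∀ w, X.i w ∈ T0) →
      ((m : ℤ) + 1) * ((finrank ℂ V0 : ℤ) - (finrank ℂ T0 : ℤ)) ≤
        (m : ℤ) * ((finrank ℂ V1 : ℤ) - (finrank ℂ T1 : ℤ)))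

/-!
If `dμ` were not surjective, the perfect trace pairing between `Hom(V₁, V₀)` and `Hom(V₀, V₁)`
would give a nonzero `ξ : V₀ → V₁` with `tr (ξ ∘ dμ(-)) = 0`, i.e. with `B₂ξB₁ = B₁ξB₂`,
`dB₁ξ = ξB₁d`, `dB₂ξ = ξB₂d`, `jξ = 0` and `ξi = 0`. Then `(S₀, S₁) = (B₁(im ξ) + B₂(im ξ), im ξ)`
is a sub-datum inside `ker j`, and `(T₀, T₁) = (ker ξ, ker ξB₁ ∩ ker ξB₂)` contains `im i`.
The map `v ↦ (ξB₂v, -ξB₁v)` lands in the kernel of `(x, y) ↦ B₁x + B₂y` on `im ξ × im ξ`, so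
`codim T₁ + dim S₀ ≤ 2 dim S₁`; together with the two semistability inequalities this forces
`im ξ = 0`.
-/

namespace LinearMap

section CommSemiring

variable {R A M N : Type*} [CommSemiring R] [AddCommMonoid A] [Module R A]
  [AddCommMonoid M] [Module R M] [AddCommMonoid N] [Module R N]

@[simp] lemma comp_smulRight (f : N →ₗ[R] A) (g : Dual R M) (x : N) :
    f ∘ₗ g.smulRight x = g.smulRight (f x) := by
  ext; simp

@[simp] lemma smulRight_comp (g : Dual R M) (x : N) (f : A →ₗ[R] M) :
    g.smulRight x ∘ₗ f = (g ∘ₗ f).smulRight x := rfl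

end CommSemiring

variable {K A B M N : Type*} [Field K] [AddCommGroup A] [Module K A] [AddCommGroup B] [Module K B]
  [AddCommGroup M] [Module K M] [AddCommGroup N] [Module K N]

lemma ext_of_forall_dual_apply {f g : M →ₗ[K] N} (h : ∀ x (φ : Dual K N), φ (f x) = φ (g x)) :
    f = g := by
  ext x
  rw [← sub_eq_zero]
  exact (forall_dual_apply_eq_zero_iff K _).mp fun φ => by simp [h]

lemma eq_zero_of_forall_trace_comp_eq_zero [FiniteDimensional K B] {ξ : A →ₗ[K] B}
    (h : ∀ C : B →ₗ[K] A, trace K B (ξ ∘ₗ C) = 0) : ξ = 0 :=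
  ext_of_forall_dual_apply fun x g => by simpa using h (g.smulRight x)

variable (K A B) in
noncomputable def tracePairing : (A →ₗ[K] B) →ₗ[K] Dual K (B →ₗ[K] A) :=
  (llcomp K B A B).compr₂ (trace K B)

@[simp] lemma tracePairing_apply (ξ : A →ₗ[K] B) (C : B →ₗ[K] A) :
    tracePairing K A B ξ C = trace K B (ξ ∘ₗ C) := rfl

lemma tracePairing_surjective [FiniteDimensional K A] [FiniteDimensional K B] :
    Function.Surjective (tracePairing K A B) := by
  refine (injective_iff_surjective_of_finrank_eq_finrank ?_).mp fun ξ ζ h => ?_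
  · rw [Subspace.dual_finrank_eq, finrank_linearMap, finrank_linearMap, mul_comm]
  · rw [← sub_eq_zero]
    refine eq_zero_of_forall_trace_comp_eq_zero fun C => ?_
    simpa [sub_comp, sub_eq_zero] using LinearMap.congr_fun h C

lemma surjective_of_forall_trace_comp_eq_zero [FiniteDimensional K A] [FiniteDimensional K B]
    (f : M →ₗ[K] B →ₗ[K] A) (h : ∀ ξ : A →ₗ[K] B, (∀ e, trace K B (ξ ∘ₗ f e) = 0) → ξ = 0) :
    Function.Surjective f := by
  rw [← range_eq_top]
  by_contra hf
  obtain ⟨φ, hφ, hφf⟩ := (range f).exists_le_ker_of_lt_top (lt_top_iff_ne_top.mpr hf)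
  obtain ⟨ξ, rfl⟩ := tracePairing_surjective φ
  exact hφ (by rw [h ξ fun e => hφf (mem_range_self f e), map_zero])

lemma finrank_range_add_finrank_range_le [FiniteDimensional K N] {ρ : M →ₗ[K] N}
    {ψ : N →ₗ[K] B} (h : ψ ∘ₗ ρ = 0) :
    finrank K (range ρ) + finrank K (range ψ) ≤ finrank K N := by
  have := Submodule.finrank_mono (range_le_ker_iff.mpr h)
  have := finrank_range_add_finrank_ker ψ
  omega

lemma finrank_add_finrank_sup_map_range_le [FiniteDimensional K M] (B1 B2 : M →ₗ[K] N)
    (ξ : N →ₗ[K] M) (h : B2 ∘ₗ ξ ∘ₗ B1 = B1 ∘ₗ ξ ∘ₗ B2) :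
    finrank K M + finrank K ((range ξ).map B1 ⊔ (range ξ).map B2 : Submodule K N) ≤
      2 * finrank K (range ξ) + finrank K (ker (ξ ∘ₗ B1) ⊓ ker (ξ ∘ₗ B2) : Submodule K M) := by
  let ρ : M →ₗ[K] range ξ × range ξ :=
    (ξ.rangeRestrict ∘ₗ B2).prod (-(ξ.rangeRestrict ∘ₗ B1))
  let ψ : range ξ × range ξ →ₗ[K] N := (B1 ∘ₗ (range ξ).subtype).coprod (B2 ∘ₗ (range ξ).subtype)
  have hψρ : ψ ∘ₗ ρ = 0 := by
    ext v
    simpa [ρ, ψ, ← sub_eq_add_neg, sub_eq_zero] using (LinearMap.congr_fun h v).symm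
  have hker : ker ρ = ker (ξ ∘ₗ B1) ⊓ ker (ξ ∘ₗ B2) := by
    simp [ρ, ker_prod, ker_comp, inf_comm]
  have hrange : range ψ = (range ξ).map B1 ⊔ (range ξ).map B2 := by
    simp [ψ, range_coprod, range_comp]
  have hexact := finrank_range_add_finrank_range_le hψρ
  have hrank := finrank_range_add_finrank_ker ρ
  rw [finrank_prod, hrange] at hexact
  rw [hker] at hrank
  omega

end LinearMap

namespace ADHMW

open LinearMap

variable {V0 V1 W : Type*} [AddCommGroup V0] [Module ℂ V0] [AddCommGroup V1] [Module ℂ V1]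
  [AddCommGroup W] [Module ℂ W] (X : ADHMW V0 V1 W)

noncomputable def dmu :
    (V0 →ₗ[ℂ] V1) × (V1 →ₗ[ℂ] V0) × (V1 →ₗ[ℂ] V0) × (W →ₗ[ℂ] V0) × (V1 →ₗ[ℂ] W) →ₗ[ℂ]
      V1 →ₗ[ℂ] V0 where
  toFun := fun ⟨dt, Bt1, Bt2, it, jt⟩ =>
    X.B1 ∘ₗ X.d ∘ₗ Bt2 + X.B1 ∘ₗ dt ∘ₗ X.B2 + Bt1 ∘ₗ X.d ∘ₗ X.B2
      - X.B2 ∘ₗ X.d ∘ₗ Bt1 - X.B2 ∘ₗ dt ∘ₗ X.B1 - Bt2 ∘ₗ X.d ∘ₗ X.B1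
      + it ∘ₗ X.j + X.i ∘ₗ jt
  map_add' _ _ := by ext; simp; abel
  map_smul' _ _ := by ext; simp [smul_sub]

@[simp] lemma dmu_apply (dt : V0 →ₗ[ℂ] V1) (Bt1 Bt2 : V1 →ₗ[ℂ] V0) (it : W →ₗ[ℂ] V0)
    (jt : V1 →ₗ[ℂ] W) :
    X.dmu (dt, Bt1, Bt2, it, jt) =
      X.B1 ∘ₗ X.d ∘ₗ Bt2 + X.B1 ∘ₗ dt ∘ₗ X.B2 + Bt1 ∘ₗ X.d ∘ₗ X.B2
        - X.B2 ∘ₗ X.d ∘ₗ Bt1 - X.B2 ∘ₗ dt ∘ₗ X.B1 - Bt2 ∘ₗ X.d ∘ₗ X.B1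
        + it ∘ₗ X.j + X.i ∘ₗ jt := rfl

/-- The equations saying that `tr (ξ ∘ X.dmu e) = 0` for all `e`, one for each component of `e`. -/
structure IsTraceOrthogonal (ξ : V0 →ₗ[ℂ] V1) : Prop where
  B_comm : X.B2 ∘ₗ ξ ∘ₗ X.B1 = X.B1 ∘ₗ ξ ∘ₗ X.B2
  d_comm_B1 : X.d ∘ₗ X.B1 ∘ₗ ξ = ξ ∘ₗ X.B1 ∘ₗ X.d
  d_comm_B2 : X.d ∘ₗ X.B2 ∘ₗ ξ = ξ ∘ₗ X.B2 ∘ₗ X.d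
  j_comp : X.j ∘ₗ ξ = 0
  comp_i : ξ ∘ₗ X.i = 0

lemma isTraceOrthogonal_of_trace_comp_dmu [FiniteDimensional ℂ V1] {ξ : V0 →ₗ[ℂ] V1}
    (hξ : ∀ e, trace ℂ V1 (ξ ∘ₗ X.dmu e) = 0) : X.IsTraceOrthogonal ξ where
  B_comm := ext_of_forall_dual_apply fun x g => by
    simpa [comp_sub, sub_eq_zero] using hξ (g.smulRight x, 0, 0, 0, 0)
  d_comm_B1 := ext_of_forall_dual_apply fun x g => .symm <| by
    simpa [comp_sub, sub_eq_zero] using hξ (0, 0, g.smulRight x, 0, 0)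
  d_comm_B2 := ext_of_forall_dual_apply fun x g => by
    simpa [comp_sub, sub_eq_zero] using hξ (0, g.smulRight x, 0, 0, 0)
  j_comp := ext_of_forall_dual_apply fun x g => by
    simpa using hξ (0, 0, 0, g.smulRight x, 0)
  comp_i := ext_of_forall_dual_apply fun w g => by
    simpa using hξ (0, 0, 0, 0, g.smulRight w)

namespace IsTraceOrthogonal

variable {X} {ξ : V0 →ₗ[ℂ] V1} (hξ : X.IsTraceOrthogonal ξ) {m : ℕ} (hX : MMSemistable m X)
include hξ hX

lemma finrank_range_le :
    (m : ℤ) * finrank ℂ (range ξ) ≤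
      (m + 1) * finrank ℂ ((range ξ).map X.B1 ⊔ (range ξ).map X.B2 : Submodule ℂ V0) := by
  refine hX.1 _ _ (fun x hx => Submodule.mem_sup_left (Submodule.mem_map_of_mem hx))
    (fun x hx => Submodule.mem_sup_right (Submodule.mem_map_of_mem hx)) (fun x hx => ?_) ?_
  · have map_le (B : V1 →ₗ[ℂ] V0) (hB : X.d ∘ₗ B ∘ₗ ξ = ξ ∘ₗ B ∘ₗ X.d) :
        (range ξ).map B ≤ (range ξ).comap X.d := by
      rintro - ⟨-, ⟨a, rfl⟩, rfl⟩
      exact ⟨B (X.d a), (LinearMap.congr_fun hB a).symm⟩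
    exact sup_le (map_le _ hξ.d_comm_B1) (map_le _ hξ.d_comm_B2) hx
  · rintro - ⟨x, rfl⟩
    exact LinearMap.congr_fun hξ.j_comp x

lemma le_finrank_ker :
    ((m : ℤ) + 1) * (finrank ℂ V0 - finrank ℂ (ker ξ)) ≤
      m * (finrank ℂ V1 - finrank ℂ (ker (ξ ∘ₗ X.B1) ⊓ ker (ξ ∘ₗ X.B2) : Submodule ℂ V1)) := by
  refine hX.2 _ _ (fun x hx => hx.1) (fun x hx => hx.2) (fun x hx => ?_)
    (fun w => LinearMap.congr_fun hξ.comp_i w)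
  have hx : ξ x = 0 := hx
  exact ⟨by simpa [hx] using (LinearMap.congr_fun hξ.d_comm_B1 x).symm,
    by simpa [hx] using (LinearMap.congr_fun hξ.d_comm_B2 x).symm⟩

lemma eq_zero [FiniteDimensional ℂ V0] [FiniteDimensional ℂ V1] : ξ = 0 := by
  have hS := hξ.finrank_range_le hX
  have hT := hξ.le_finrank_ker hX
  have hdim := finrank_add_finrank_sup_map_range_le X.B1 X.B2 ξ hξ.B_comm
  have hrank := finrank_range_add_finrank_ker ξ
  have : finrank ℂ (range ξ) = 0 := by
    zify at hdim hrank ⊢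
    rw [← hrank, add_sub_cancel_right] at hT
    have hm : (0 : ℤ) ≤ m := m.cast_nonneg
    have hm1 : (0 : ℤ) ≤ m + 1 := by omega
    nlinarith [mul_le_mul_of_nonneg_left hdim (mul_nonneg hm hm1),
      mul_le_mul_of_nonneg_left hS hm, mul_le_mul_of_nonneg_left hT hm1]
  exact range_eq_bot.mp (Submodule.finrank_eq_zero.mp this)

end IsTraceOrthogonal

end ADHMW

theorem dmu_surjective_general (m : ℕ) {V0 V1 W : Type*}
    [AddCommGroup V0] [Module ℂ V0] [FiniteDimensional ℂ V0]
    [AddCommGroup V1] [Module ℂ V1] [FiniteDimensional ℂ V1]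
    [AddCommGroup W] [Module ℂ W]
    (X : ADHMW V0 V1 W) (hX : MMSemistable m X) :
    ∀ C : V1 →ₗ[ℂ] V0,
      ∃ (dt : V0 →ₗ[ℂ] V1) (Bt1 Bt2 : V1 →ₗ[ℂ] V0) (it : W →ₗ[ℂ] V0) (jt : V1 →ₗ[ℂ] W),
        X.B1 ∘ₗ X.d ∘ₗ Bt2 + X.B1 ∘ₗ dt ∘ₗ X.B2 + Bt1 ∘ₗ X.d ∘ₗ X.B2
          - X.B2 ∘ₗ X.d ∘ₗ Bt1 - X.B2 ∘ₗ dt ∘ₗ X.B1 - Bt2 ∘ₗ X.d ∘ₗ X.B1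
          + it ∘ₗ X.j + X.i ∘ₗ jt = C := by
  intro C
  obtain ⟨⟨dt, Bt1, Bt2, it, jt⟩, rfl⟩ := LinearMap.surjective_of_forall_trace_comp_eq_zero X.dmu
    (fun ξ hξ => (X.isTraceOrthogonal_of_trace_comp_dmu hξ).eq_zero hX) C
  exact ⟨dt, Bt1, Bt2, it, jt, rfl⟩

/-- On an `(m,m+1)`-semistable ADHM datum, the differential `dμ` of the moment map is
surjective. -/
theorem dmu_surjective (m : ℕ) {V0 V1 W : Type*}
    [AddCommGroup V0] [Module ℂ V0] [FiniteDimensional ℂ V0]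
    [AddCommGroup V1] [Module ℂ V1] [FiniteDimensional ℂ V1]
    [AddCommGroup W] [Module ℂ W] [FiniteDimensional ℂ W]
    (X : ADHMW V0 V1 W) (hX : MMSemistable m X) :
    ∀ C : V1 →ₗ[ℂ] V0,
      ∃ (dt : V0 →ₗ[ℂ] V1) (Bt1 Bt2 : V1 →ₗ[ℂ] V0) (it : W →ₗ[ℂ] V0) (jt : V1 →ₗ[ℂ] W),
        X.B1 ∘ₗ X.d ∘ₗ Bt2 + X.B1 ∘ₗ dt ∘ₗ X.B2 + Bt1 ∘ₗ X.d ∘ₗ X.B2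
          - X.B2 ∘ₗ X.d ∘ₗ Bt1 - X.B2 ∘ₗ dt ∘ₗ X.B1 - Bt2 ∘ₗ X.d ∘ₗ X.B1
          + it ∘ₗ X.j + X.i ∘ₗ jt = C :=
  dmu_surjective_general m X hX
end

section
/- Let X = (B_1, B_2, d, i, j) be an ADHM datum on (V_0, V_1, W) satisfying the ADHM relation, and assume X is (m,m+1)-semistable. Then the linear map τ : Hom(V_0, ℂ^{m+1}) ⊕ Hom(V_1, ℂ^m) ⊕ Hom(V_1, ℂ^m) ⊕ Hom(W, ℂ^m) → Hom(V_1, ℂ^m) defined by τ(d̃, B̃_1, B̃_2, ĩ) = P_1∘d̃∘B_2 − P_2∘d̃∘B_1 + ĩ∘j + B̃_1∘d∘B_2 − B̃_2∘d∘B_1 is surjective. -/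
open Module Finset

lemma sum_mul_single_eq {n : ℕ} (c : Fin n → ℂ) (k : Fin n) :
    ∑ l, c l * (Pi.single k 1 : Fin n → ℂ) l = c k := by
  simp [Pi.single_apply, mul_ite, Finset.sum_ite_eq']

lemma sum_mul_single_castSucc {n : ℕ} (c : Fin n → ℂ) (l : Fin (n+1)) :
    ∑ k, c k * (Pi.single l 1 : Fin (n+1) → ℂ) (Fin.castSucc k) = (Fin.snoc c 0 : Fin (n+1) → ℂ) l := by
  induction l using Fin.lastCases with
  | last => simp [Pi.single_apply, (Fin.castSucc_lt_last _).ne]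
  | cast k₀ => simp [Pi.single_apply, Fin.castSucc_inj, mul_ite, Finset.sum_ite_eq']

lemma sum_mul_single_succ {n : ℕ} (c : Fin n → ℂ) (l : Fin (n+1)) :
    ∑ k, c k * (Pi.single l 1 : Fin (n+1) → ℂ) (Fin.succ k) = (Fin.cons 0 c : Fin (n+1) → ℂ) l := by
  induction l using Fin.cases with
  | zero => simp [Pi.single_apply, Fin.succ_ne_zero]
  | succ k₀ => simp [Pi.single_apply, Fin.succ_inj, mul_ite, Finset.sum_ite_eq']

/-- The pairing sending `φ : Fin m → V1` to the functional
`D ↦ ∑ k, D (φ k) k` on `V1 →ₗ[ℂ] (Fin m → ℂ)`. -/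
noncomputable def evalSum (m : ℕ) {V1 : Type*} [AddCommGroup V1] [Module ℂ V1] :
    (Fin m → V1) →ₗ[ℂ] Module.Dual ℂ (V1 →ₗ[ℂ] (Fin m → ℂ)) where
  toFun φ :=
    { toFun := fun D => ∑ k, D (φ k) k
      map_add' := fun D D' => by simp [Finset.sum_add_distrib]
      map_smul' := fun c D => by simp [Finset.mul_sum] }
  map_add' φ ψ := by
    ext D
    simp [Finset.sum_add_distrib]
  map_smul' c φ := by
    ext D
    simp [Finset.mul_sum]

lemma evalSum_apply (m : ℕ) {V1 : Type*} [AddCommGroup V1] [Module ℂ V1]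
    (φ : Fin m → V1) (D : V1 →ₗ[ℂ] (Fin m → ℂ)) :
    evalSum m φ D = ∑ k, D (φ k) k := rfl

lemma evalSum_surjective (m : ℕ) {V1 : Type*} [AddCommGroup V1] [Module ℂ V1]
    [FiniteDimensional ℂ V1] :
    Function.Surjective (evalSum m (V1 := V1)) := by
  have hinj : Function.Injective (evalSum m (V1 := V1)) := by
    rw [← LinearMap.ker_eq_bot, LinearMap.ker_eq_bot']
    intro φ hφ
    funext k
    apply (Module.forall_dual_apply_eq_zero_iff ℂ (φ k)).mp
    intro f
    have h : evalSum m φ (f.smulRight (Pi.single k 1)) = 0 := by rw [hφ]; rfl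
    rw [evalSum_apply] at h
    simpa [LinearMap.smulRight_apply, sum_mul_single_eq (fun l => f (φ l)) k] using h
  have hrank : finrank ℂ (Fin m → V1)
      = finrank ℂ (Module.Dual ℂ (V1 →ₗ[ℂ] (Fin m → ℂ))) := by
    rw [Subspace.dual_finrank_eq, Module.finrank_linearMap, Module.finrank_pi,
      Module.finrank_pi_fintype, Fintype.card_fin]
    simp [mul_comm]
  exact (LinearMap.injective_iff_surjective_of_finrank_eq_finrank hrank).mp hinj

open Module

/-- `P1 : ℂ^{m+1} → ℂ^m`, `(x₁, …, x_{m+1}) ↦ (x₁, …, x_m)`. -/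
def P1 (m : ℕ) : (Fin (m + 1) → ℂ) →ₗ[ℂ] (Fin m → ℂ) :=
  LinearMap.funLeft ℂ ℂ Fin.castSucc

/-- `P2 : ℂ^{m+1} → ℂ^m`, `(x₁, …, x_{m+1}) ↦ (x₂, …, x_{m+1})`. -/
def P2 (m : ℕ) : (Fin (m + 1) → ℂ) →ₗ[ℂ] (Fin m → ℂ) :=
  LinearMap.funLeft ℂ ℂ Fin.succ

/-- The range of `τ` as a submodule of `Hom(V1, ℂ^m)`. -/
noncomputable def tauRange (m : ℕ) {V0 V1 W : Type*}
    [AddCommGroup V0] [Module ℂ V0] [AddCommGroup V1] [Module ℂ V1]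
    [AddCommGroup W] [Module ℂ W] (X : ADHMW V0 V1 W) :
    Submodule ℂ (V1 →ₗ[ℂ] (Fin m → ℂ)) where
  carrier := {C | ∃ (dt : V0 →ₗ[ℂ] (Fin (m + 1) → ℂ)) (Bt1 Bt2 : V1 →ₗ[ℂ] (Fin m → ℂ))
      (it : W →ₗ[ℂ] (Fin m → ℂ)),
      P1 m ∘ₗ dt ∘ₗ X.B2 - P2 m ∘ₗ dt ∘ₗ X.B1 + it ∘ₗ X.j
        + Bt1 ∘ₗ X.d ∘ₗ X.B2 - Bt2 ∘ₗ X.d ∘ₗ X.B1 = C}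
  zero_mem' := ⟨0, 0, 0, 0, by ext v; simp⟩
  add_mem' := by
    rintro a b ⟨dt, b1, b2, it, rfl⟩ ⟨dt', b1', b2', it', rfl⟩
    refine ⟨dt + dt', b1 + b1', b2 + b2', it + it', ?_⟩
    ext v k
    simp
    ring
  smul_mem' := by
    rintro c a ⟨dt, b1, b2, it, rfl⟩
    refine ⟨c • dt, c • b1, c • b2, c • it, ?_⟩
    ext v k
    simp
    ring

/-- Surjectivity of the map `τ` computing `Ext²(E, C_m) = 0` for an `(m,m+1)`-semistable
ADHM datum. -/
theorem tau_surjective_Ext_to_Cm (m : ℕ) {V0 V1 W : Type*}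
    [AddCommGroup V0] [Module ℂ V0] [FiniteDimensional ℂ V0]
    [AddCommGroup V1] [Module ℂ V1] [FiniteDimensional ℂ V1]
    [AddCommGroup W] [Module ℂ W] [FiniteDimensional ℂ W]
    (X : ADHMW V0 V1 W) (hX : MMSemistable m X) :
    ∀ C : V1 →ₗ[ℂ] (Fin m → ℂ),
      ∃ (dt : V0 →ₗ[ℂ] (Fin (m + 1) → ℂ)) (Bt1 Bt2 : V1 →ₗ[ℂ] (Fin m → ℂ))
        (it : W →ₗ[ℂ] (Fin m → ℂ)),
        P1 m ∘ₗ dt ∘ₗ X.B2 - P2 m ∘ₗ dt ∘ₗ X.B1 + it ∘ₗ X.j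
          + Bt1 ∘ₗ X.d ∘ₗ X.B2 - Bt2 ∘ₗ X.d ∘ₗ X.B1 = C := by
  intro C
  by_contra hC
  have hCR : C ∉ tauRange m X := hC
  have hlt : tauRange m X < ⊤ := lt_top_iff_ne_top.mpr (fun h => hCR (h ▸ Submodule.mem_top))
  obtain ⟨ξ, hξ0, hξmap⟩ := Submodule.exists_dual_map_eq_bot_of_lt_top hlt inferInstance
  have hξR : ∀ x ∈ tauRange m X, ξ x = 0 := by
    intro x hx
    have h2 : ξ x ∈ (tauRange m X).map ξ := Submodule.mem_map_of_mem hx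
    rw [hξmap] at h2
    simpa using h2
  obtain ⟨φ, hφ⟩ := evalSum_surjective m (V1 := V1) ξ
  have hφ0 : φ ≠ 0 := fun h => hξ0 (by rw [← hφ, h, map_zero])
  have hvan : ∀ (dt : V0 →ₗ[ℂ] (Fin (m + 1) → ℂ)) (Bt1 Bt2 : V1 →ₗ[ℂ] (Fin m → ℂ))
      (it : W →ₗ[ℂ] (Fin m → ℂ)),
      evalSum m φ (P1 m ∘ₗ dt ∘ₗ X.B2 - P2 m ∘ₗ dt ∘ₗ X.B1 + it ∘ₗ X.j
        + Bt1 ∘ₗ X.d ∘ₗ X.B2 - Bt2 ∘ₗ X.d ∘ₗ X.B1) = 0 := by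
    intro dt b1 b2 it
    rw [hφ]
    exact hξR _ ⟨dt, b1, b2, it, rfl⟩
  -- d ∘ B1 kills every φ k
  have hdB1 : ∀ k : Fin m, X.d (X.B1 (φ k)) = 0 := by
    intro k
    apply (Module.forall_dual_apply_eq_zero_iff ℂ _).mp
    intro f
    have h := hvan 0 0 (f.smulRight (Pi.single k 1)) 0
    simp only [LinearMap.comp_zero, LinearMap.zero_comp, zero_sub, add_zero, zero_add,
      sub_zero, map_neg, neg_eq_zero] at h
    rw [evalSum_apply] at h
    simpa [LinearMap.smulRight_apply,
      sum_mul_single_eq (fun l => f (X.d (X.B1 (φ l)))) k] using h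
  -- j kills every φ k
  have hj : ∀ k : Fin m, X.j (φ k) = 0 := by
    intro k
    apply (Module.forall_dual_apply_eq_zero_iff ℂ _).mp
    intro f
    have h := hvan 0 0 0 (f.smulRight (Pi.single k 1))
    simp only [LinearMap.comp_zero, LinearMap.zero_comp, zero_sub, add_zero, zero_add,
      sub_zero, map_neg, neg_eq_zero] at h
    rw [evalSum_apply] at h
    simpa [LinearMap.smulRight_apply,
      sum_mul_single_eq (fun l => f (X.j (φ l))) k] using h
  -- the chain relation
  have hchain : ∀ l : Fin (m+1),
      (Fin.snoc (fun k => X.B2 (φ k)) 0 : Fin (m+1) → V0) l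
        = (Fin.cons 0 (fun k => X.B1 (φ k)) : Fin (m+1) → V0) l := by
    intro l
    rw [← sub_eq_zero]
    apply (Module.forall_dual_apply_eq_zero_iff ℂ _).mp
    intro f
    have h := hvan (f.smulRight (Pi.single l 1)) 0 0 0
    simp only [LinearMap.comp_zero, LinearMap.zero_comp, add_zero, sub_zero] at h
    rw [map_sub, evalSum_apply, evalSum_apply] at h
    simp only [LinearMap.comp_apply, P1, P2, LinearMap.funLeft_apply, Function.comp,
      LinearMap.smulRight_apply, Pi.smul_apply, smul_eq_mul] at h
    rw [sum_mul_single_castSucc (fun k => f (X.B2 (φ k))) l,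
      sum_mul_single_succ (fun k => f (X.B1 (φ k))) l] at h
    have e1 : (f : V0 → ℂ) ∘ (Fin.snoc (fun k => X.B2 (φ k)) 0 : Fin (m+1) → V0)
        = (Fin.snoc (fun k => f (X.B2 (φ k))) 0 : Fin (m+1) → ℂ) := by
      rw [Fin.comp_snoc, map_zero]
      rfl
    have e2 : (f : V0 → ℂ) ∘ (Fin.cons 0 (fun k => X.B1 (φ k)) : Fin (m+1) → V0)
        = (Fin.cons 0 (fun k => f (X.B1 (φ k))) : Fin (m+1) → ℂ) := by
      rw [Fin.comp_cons, map_zero]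
      rfl
    rw [map_sub]
    show ((f : V0 → ℂ) ∘ (Fin.snoc (fun k => X.B2 (φ k)) 0 : Fin (m+1) → V0)) l
        - ((f : V0 → ℂ) ∘ (Fin.cons 0 (fun k => X.B1 (φ k)) : Fin (m+1) → V0)) l = 0
    rw [e1, e2]
    exact h
  have F0 : ∀ k : Fin m, (k : ℕ) = 0 → X.B2 (φ k) = 0 := by
    intro k hk
    have h := hchain (Fin.castSucc k)
    rw [Fin.snoc_castSucc] at h
    have hcs : Fin.castSucc k = 0 := by
      ext
      simpa using hk
    rw [hcs, Fin.cons_zero] at h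
    exact h
  have Fstep : ∀ k k' : Fin m, (k : ℕ) + 1 = (k' : ℕ) → X.B2 (φ k') = X.B1 (φ k) := by
    intro k k' hk
    have h := hchain (Fin.castSucc k')
    rw [Fin.snoc_castSucc] at h
    have hcs : Fin.castSucc k' = Fin.succ k := by
      ext
      simp [← hk]
    rw [hcs, Fin.cons_succ] at h
    exact h
  have Flast : ∀ k : Fin m, (k : ℕ) + 1 = m → X.B1 (φ k) = 0 := by
    intro k hk
    have h := hchain (Fin.succ k)
    rw [Fin.cons_succ] at h
    have hcs : Fin.succ k = Fin.last m := by
      ext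
      simp [hk]
    rw [hcs, Fin.snoc_last] at h
    exact h.symm
  -- the submodules
  set S1 : Submodule ℂ V1 := Submodule.span ℂ (Set.range φ) with hS1
  set S0 : Submodule ℂ V0 := S1.map X.B1 with hS0
  have hφmem : ∀ k, φ k ∈ S1 := fun k => Submodule.subset_span ⟨k, rfl⟩
  have hmapeq : S1.map X.B2 = S0 := by
    rw [hS0, hS1, Submodule.map_span, Submodule.map_span]
    apply le_antisymm
    · rw [Submodule.span_le]
      rintro _ ⟨_, ⟨k, rfl⟩, rfl⟩
      by_cases hk : (k : ℕ) = 0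
      · rw [F0 k hk]
        exact Submodule.zero_mem _
      · obtain ⟨k', hk'⟩ : ∃ k' : Fin m, (k' : ℕ) + 1 = (k : ℕ) :=
          ⟨⟨(k : ℕ) - 1, by omega⟩, by simp; omega⟩
        rw [Fstep k' k hk']
        exact Submodule.subset_span (Set.mem_image_of_mem _ ⟨k', rfl⟩)
    · rw [Submodule.span_le]
      rintro _ ⟨_, ⟨k, rfl⟩, rfl⟩
      by_cases hk : (k : ℕ) + 1 = m
      · rw [Flast k hk]
        exact Submodule.zero_mem _
      · have hlt : (k : ℕ) + 1 < m := by
          have := k.isLt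
          omega
        rw [← Fstep k ⟨(k : ℕ) + 1, hlt⟩ rfl]
        exact Submodule.subset_span (Set.mem_image_of_mem _ ⟨⟨(k : ℕ) + 1, hlt⟩, rfl⟩)
  have hkerd : ∀ x ∈ S1, X.d (X.B1 x) = 0 := by
    have hsub : S1 ≤ LinearMap.ker (X.d ∘ₗ X.B1) := by
      rw [hS1, Submodule.span_le]
      rintro _ ⟨k, rfl⟩
      simp [LinearMap.mem_ker, hdB1 k]
    intro x hx
    simpa using hsub hx
  have hkerj : ∀ x ∈ S1, X.j x = 0 := by
    have hsub : S1 ≤ LinearMap.ker X.j := by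
      rw [hS1, Submodule.span_le]
      rintro _ ⟨k, rfl⟩
      simp [LinearMap.mem_ker, hj k]
    intro x hx
    simpa using hsub hx
  have hineq := hX.1 S0 S1
    (fun x hx => Submodule.mem_map_of_mem hx)
    (fun x hx => hmapeq ▸ Submodule.mem_map_of_mem hx)
    (by
      rintro _ ⟨y, hy, rfl⟩
      rw [hkerd y hy]
      exact Submodule.zero_mem _)
    hkerj
  have hle : finrank ℂ S0 ≤ finrank ℂ S1 := Submodule.finrank_map_le X.B1 S1
  have hs1m : finrank ℂ S1 ≤ m := by
    have := finrank_range_le_card (R := ℂ) φ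
    simpa [Set.finrank, hS1] using this
  have heq : finrank ℂ S1 = finrank ℂ S0 := by
    rcases eq_or_lt_of_le hle with h | h
    · exact h.symm
    · exfalso
      have h1 : ((finrank ℂ S0 : ℤ) + 1) ≤ (finrank ℂ S1 : ℤ) := by exact_mod_cast h
      have h2 : (finrank ℂ S1 : ℤ) ≤ (m : ℤ) := by exact_mod_cast hs1m
      have h3 : (0 : ℤ) ≤ (finrank ℂ S0 : ℤ) := by positivity
      nlinarith [hineq]
  -- B2 is injective on S1
  have hrestrict : ∀ x ∈ S1, X.B2 x ∈ S0 := fun x hx => hmapeq ▸ Submodule.mem_map_of_mem hx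
  have hf2surj : Function.Surjective (X.B2.restrict hrestrict) := by
    rintro ⟨y, hy⟩
    rw [← hmapeq] at hy
    obtain ⟨x, hx, rfl⟩ := hy
    exact ⟨⟨x, hx⟩, rfl⟩
  have hf2inj : Function.Injective (X.B2.restrict hrestrict) :=
    (LinearMap.injective_iff_surjective_of_finrank_eq_finrank heq).mpr hf2surj
  have hB2zero : ∀ x, (hx : x ∈ S1) → X.B2 x = 0 → x = 0 := by
    intro x hx h0
    have h1 : X.B2.restrict hrestrict ⟨x, hx⟩ = 0 := by
      apply Subtype.ext
      simpa [LinearMap.restrict_apply] using h0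
    have h2 : (⟨x, hx⟩ : S1) = 0 := hf2inj (by rw [h1, map_zero])
    simpa using congrArg Subtype.val h2
  -- conclude every φ k = 0
  have hall : ∀ (r : ℕ) (hr : r < m), φ ⟨r, hr⟩ = 0 := by
    intro r
    induction r with
    | zero => exact fun hr => hB2zero _ (hφmem _) (F0 ⟨0, hr⟩ rfl)
    | succ n ih =>
      intro hr
      have hn : n < m := by omega
      have h1 : φ ⟨n, hn⟩ = 0 := ih hn
      have h2 : X.B2 (φ ⟨n + 1, hr⟩) = X.B1 (φ ⟨n, hn⟩) := Fstep ⟨n, hn⟩ ⟨n + 1, hr⟩ rfl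
      rw [h1, map_zero] at h2
      exact hB2zero _ (hφmem _) h2
  exact hφ0 (funext fun k => by simpa [Fin.eta] using hall k.val k.isLt)
end
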